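/- arXiv:2209.01767 — 7 statements merged into one kernel-verified Lean document; each statement's English description precedes it below -/
import Mathlib

section
/- Let X be a real or complex Banach space and U a subset of its unit sphere. Then the norm of X is uniformly strongly subdifferentiable on U (i.e. lim_{t→0⁺} sup{ (‖x+th‖−1)/t − τ(x,h) : h ∈ B_X, x ∈ U } = 0, where τ(x,h) = sup{ Re f(h) : f ∈ S_{X*}, f(x)=1 }) if and only if the pair (X, 𝕂) has the Bishop–Phelps–Bollobás point property for the set U, i.e. for every ε>0 there exists η(ε)>0 such that whenever x* ∈ S_{X*} and u ∈ U satisfy |x*(u)| > 1−η(ε), there exists x₂* ∈ S_{X*} with |x₂*(u)| = 1 and ‖x*−x₂*‖ < ε. -/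
/-!
Suppose first that the difference quotients `(‖x + t h‖ - 1) / t` converge to `τ(x, h)` uniformly
on `U × B_X`, fix a small `t`, and let `f ∈ S_{X*}` with `Re f(u)` very close to `1`. Testing `f` at
`u + t h` shows `Re f(h) ≤ τ(u, h) + ε/2` for every `h ∈ B_X`. If `f` were at distance `≥ ε` from
the face `{g : ‖g‖ ≤ 1, g(u) = 1}`, which is weak*-compact and convex, Sion's minimax theorem
(applied after a finite subcover) would produce one `h ∈ B_X` with `Re f(h) - Re g(h) > ε/2` for all
`g` in the face, so that `τ(u, h) ≤ Re f(h) - ε/2`: a contradiction.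

Conversely, if `F` norms `x + t h`, then `(‖x + t h‖ - 1) / t ≤ Re F(h)` and `Re F(x) ≥ 1 - 2t`, so
the point property yields `g` with `g(x) = 1` close to `F`, and
`(‖x + t h‖ - 1) / t ≤ Re g(h) + ‖F - g‖ ≤ τ(x, h) + ‖F - g‖`.

Both directions use the version of the point property in which `Re f(u)` is close to `1` and
`g(u) = 1`; rotating by a unimodular scalar passes between the two, the cost of rotating `G` with
`|G(u)| = 1` to `g(u) = 1` being `‖G - g‖² = 2 (1 - Re G(u))`.
-/

open Filter Topology RCLike Metric Set

section

variable {𝕜 X : Type*} [RCLike 𝕜] [NormedAddCommGroup X] [NormedSpace 𝕜 X]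

theorem RCLike.exists_norm_eq_one_mul_eq_norm (z : 𝕜) : ∃ c : 𝕜, ‖c‖ = 1 ∧ c * z = ‖z‖ := by
  rcases eq_or_ne z 0 with rfl | hz
  · exact ⟨1, by simp, by simp⟩
  · refine ⟨‖z‖ / z, ?_, div_mul_cancel₀ _ hz⟩
    rw [norm_div, norm_ofReal, abs_norm, div_self (norm_ne_zero_iff.2 hz)]

theorem RCLike.norm_sub_one_sq_of_norm_eq_one {z : 𝕜} (hz : ‖z‖ = 1) :
    ‖z - 1‖ ^ 2 = 2 * (1 - re z) := by
  have := @norm_sub_sq 𝕜 𝕜 _ _ _ z 1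
  simp only [inner_apply, one_mul, conj_re, hz, norm_one, one_pow] at this
  linarith

namespace ContinuousLinearMap

theorem re_apply_le_opNorm_mul (φ : StrongDual 𝕜 X) (x : X) : re (φ x) ≤ ‖φ‖ * ‖x‖ :=
  (re_le_norm _).trans (φ.le_opNorm x)

theorem re_apply_le_opNorm (φ : StrongDual 𝕜 X) {x : X} (hx : ‖x‖ ≤ 1) : re (φ x) ≤ ‖φ‖ :=
  (φ.re_apply_le_opNorm_mul x).trans (mul_le_of_le_one_right (norm_nonneg _) hx)

theorem re_apply_add_smul (φ : StrongDual 𝕜 X) (x h : X) (t : ℝ) :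
    re (φ (x + (t : 𝕜) • h)) = re (φ x) + t * re (φ h) := by
  rw [map_add, map_smul, smul_eq_mul, map_add, re_ofReal_mul]

theorem exists_lt_re_apply_of_lt_opNorm (φ : StrongDual 𝕜 X) {r : ℝ} (hr : r < ‖φ‖) :
    ∃ y, ‖y‖ ≤ 1 ∧ r < re (φ y) := by
  obtain ⟨x, hx, hrx⟩ := φ.exists_lt_apply_of_lt_opNorm hr
  obtain ⟨c, hc, hcx⟩ := exists_norm_eq_one_mul_eq_norm (φ x)
  refine ⟨c • x, by rw [norm_smul, hc, one_mul]; exact hx.le, ?_⟩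
  rwa [map_smul, smul_eq_mul, hcx, ofReal_re]

theorem norm_eq_one_of_apply_eq_one {φ : StrongDual 𝕜 X} {u : X} (hu : ‖u‖ = 1)
    (hφ : ‖φ‖ ≤ 1) (hφu : φ u = 1) : ‖φ‖ = 1 :=
  hφ.antisymm <| by simpa [hφu, hu] using φ.le_opNorm u

end ContinuousLinearMap

open ContinuousLinearMap

theorem exists_forall_lt_re_apply_of_forall_lt_norm {K : Set (StrongDual 𝕜 X)}
    (hKc : IsCompact (WeakDual.toStrongDual ⁻¹' K)) (hKconv : Convex ℝ K) {δ : ℝ}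
    (hK : ∀ g ∈ K, δ < ‖g‖) : ∃ y, ‖y‖ ≤ 1 ∧ ∀ g ∈ K, δ < re (g y) := by
  rcases K.eq_empty_or_nonempty with rfl | hKne
  · exact ⟨0, by simp, by simp⟩
  have hcont (y : X) : Continuous fun g : WeakDual 𝕜 X => re (g y) :=
    continuous_re.comp (WeakDual.eval_continuous y)
  obtain ⟨s, hsB, hs, hKs⟩ := hKc.elim_finite_subcover_image (b := closedBall (0 : X) 1)
    (c := fun y => {g | δ < re (g y)}) (fun y _ => isOpen_lt continuous_const (hcont y))
    fun g hg => by
      obtain ⟨y, hy, hδy⟩ := (WeakDual.toStrongDual g).exists_lt_re_apply_of_lt_opNorm (hK _ hg)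
      exact mem_biUnion (mem_closedBall_zero_iff.2 hy) hδy
  -- Sion's minimax theorem needs a real vector space structure on `X`.
  let _ : NormedSpace ℝ X := NormedSpace.restrictScalars ℝ 𝕜 X
  obtain ⟨y, hy, hyK⟩ : ∃ y ∈ closedBall (0 : X) 1, ∀ g ∈ WeakDual.toStrongDual ⁻¹' K,
      δ < re (g y) := by
    -- `by exact` avoids a slow unification of two additive structures on `WeakDual 𝕜 X`.
    refine Sion.exists_lt_iInf_of_lt_iInf_of_finite (hKne.preimage WeakDual.toStrongDual.surjective)
      hKc (fun y _ => ?_) (fun y _ => ?_) (convex_closedBall 0 1) (fun g _ => ?_) (fun g _ => ?_)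
      (by exact hKconv) hs hsB (fun g hg => by simpa using hKs hg)
    · exact (hcont y).continuousOn.lowerSemicontinuousOn
    · refine ConvexOn.quasiconvexOn ⟨by exact hKconv, fun g₁ _ g₂ _ a b _ _ _ => le_of_eq ?_⟩
      change re ((a • WeakDual.toStrongDual g₁ + b • WeakDual.toStrongDual g₂) y) = _
      simp [smul_re]
    · exact (continuous_re.comp (WeakDual.toStrongDual g).continuous).upperSemicontinuous
        |>.upperSemicontinuousOn _
    · exact (reLm.comp ((WeakDual.toStrongDual g).toLinearMap.restrictScalars ℝ)).concaveOn
        (convex_closedBall 0 1) |>.quasiconcaveOn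
  exact ⟨y, mem_closedBall_zero_iff.1 hy, hyK⟩

theorem exists_forall_lt_re_sub_of_forall_lt_norm_sub (u : X) (f : StrongDual 𝕜 X) {δ : ℝ}
    (hf : ∀ g : StrongDual 𝕜 X, ‖g‖ ≤ 1 → g u = 1 → δ < ‖f - g‖) :
    ∃ h : X, ‖h‖ ≤ 1 ∧ ∀ g : StrongDual 𝕜 X, ‖g‖ ≤ 1 → g u = 1 → δ < re (f h) - re (g h) := by
  -- `K = f - {g | ‖g‖ ≤ 1 ∧ g u = 1}`
  set K : Set (StrongDual 𝕜 X) := closedBall f 1 ∩ {φ | φ u = f u - 1}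
  have hKc : IsCompact (WeakDual.toStrongDual ⁻¹' K) :=
    (WeakDual.isCompact_closedBall f 1).inter_right
      (isClosed_eq (WeakDual.eval_continuous u) continuous_const)
  have hKconv : Convex ℝ K := by
    refine (convex_closedBall f 1).inter fun φ₁ hφ₁ φ₂ hφ₂ a b _ _ hab => ?_
    change (a • φ₁ + b • φ₂) u = f u - 1
    rw [add_apply, smul_apply, smul_apply, hφ₁.out, hφ₂.out, ← add_smul, hab, one_smul]
  obtain ⟨h, hh, hK⟩ := exists_forall_lt_re_apply_of_forall_lt_norm hKc hKconv
    fun φ ⟨hφf, hφu⟩ => by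
      simpa using hf (f - φ) (by rwa [norm_sub_rev, ← mem_closedBall_iff_norm])
        (by rw [sub_apply, hφu.out]; ring)
  refine ⟨h, hh, fun g hg hgu => ?_⟩
  simpa using hK (f - g) ⟨by simpa using hg, by simp [hgu]⟩

variable (𝕜) in
/-- The paper's `τ(x, h)`. -/
noncomputable def normDirDeriv (x h : X) : ℝ :=
  sSup {s : ℝ | ∃ f : X →L[𝕜] 𝕜, ‖f‖ = 1 ∧ f x = 1 ∧ s = RCLike.re (f h)}

variable (𝕜) in
noncomputable def ussdGap (U : Set X) (t : ℝ) : ℝ :=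
  sSup {r : ℝ | ∃ x ∈ U, ∃ h : X, ‖h‖ ≤ 1 ∧
    r = (‖x + (t : 𝕜) • h‖ - 1) / t - normDirDeriv 𝕜 x h}

variable (𝕜) in
def IsUSSDOn (U : Set X) : Prop :=
  ∀ ε > (0 : ℝ), ∀ᶠ t : ℝ in 𝓝[>] 0, ∀ x ∈ U, ∀ h : X, ‖h‖ ≤ 1 →
    (‖x + (t : 𝕜) • h‖ - 1) / t - normDirDeriv 𝕜 x h ≤ ε

variable (𝕜) in
def HasBPBpp (U : Set X) : Prop :=
  ∀ ε > (0 : ℝ), ∃ η > (0 : ℝ), ∀ f : X →L[𝕜] 𝕜, ‖f‖ = 1 → ∀ u ∈ U, ‖f u‖ > 1 - η →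
    ∃ g : X →L[𝕜] 𝕜, ‖g‖ = 1 ∧ ‖g u‖ = 1 ∧ ‖f - g‖ < ε

variable (𝕜) in
def HasBPBppRe (U : Set X) : Prop :=
  ∀ ε > (0 : ℝ), ∃ η > (0 : ℝ), ∀ f : X →L[𝕜] 𝕜, ‖f‖ = 1 → ∀ u ∈ U, 1 - η < re (f u) →
    ∃ g : X →L[𝕜] 𝕜, ‖g‖ = 1 ∧ g u = 1 ∧ ‖f - g‖ < ε

section normDirDeriv

variable {x : X} (h : X)

theorem exists_norm_eq_one_apply_eq_one (hx : ‖x‖ = 1) :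
    ∃ g : StrongDual 𝕜 X, ‖g‖ = 1 ∧ g x = 1 := by
  obtain ⟨g, hg, hgx⟩ := exists_dual_vector 𝕜 x (by simp [hx])
  exact ⟨g, hg, by rw [hgx, hx, ofReal_one]⟩

theorem re_apply_le_normDirDeriv {g : StrongDual 𝕜 X} (hg : ‖g‖ = 1) (hgx : g x = 1) :
    re (g h) ≤ normDirDeriv 𝕜 x h := by
  refine le_csSup ⟨‖h‖, ?_⟩ ⟨g, hg, hgx, rfl⟩
  rintro _ ⟨f, hf, -, rfl⟩
  simpa [hf] using f.re_apply_le_opNorm_mul h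

theorem normDirDeriv_le (hx : ‖x‖ = 1) {a : ℝ}
    (H : ∀ g : StrongDual 𝕜 X, ‖g‖ = 1 → g x = 1 → re (g h) ≤ a) : normDirDeriv 𝕜 x h ≤ a := by
  obtain ⟨g, hg, hgx⟩ := exists_norm_eq_one_apply_eq_one (𝕜 := 𝕜) hx
  refine csSup_le ⟨_, g, hg, hgx, rfl⟩ ?_
  rintro _ ⟨f, hf, hfx, rfl⟩
  exact H f hf hfx

theorem neg_norm_le_normDirDeriv (hx : ‖x‖ = 1) : -‖h‖ ≤ normDirDeriv 𝕜 x h := by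
  obtain ⟨g, hg, hgx⟩ := exists_norm_eq_one_apply_eq_one (𝕜 := 𝕜) hx
  refine le_trans ?_ (re_apply_le_normDirDeriv h hg hgx)
  exact neg_le.1 (by simpa [hg] using g.re_apply_le_opNorm_mul (-h))

variable {t : ℝ} (ht : 0 < t)
include ht

theorem normDirDeriv_le_div (hx : ‖x‖ = 1) :
    normDirDeriv 𝕜 x h ≤ (‖x + (t : 𝕜) • h‖ - 1) / t := by
  refine normDirDeriv_le h hx fun g hg hgx => ?_
  rw [le_div_iff₀ ht]
  have := g.re_apply_add_smul x h t
  rw [hgx, one_re] at this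
  have hle : re (g (x + (t : 𝕜) • h)) ≤ ‖x + (t : 𝕜) • h‖ := by
    simpa [hg] using g.re_apply_le_opNorm_mul (x + (t : 𝕜) • h)
  linarith

theorem norm_add_smul_sub_one_div_le (hx : ‖x‖ = 1) : (‖x + (t : 𝕜) • h‖ - 1) / t ≤ ‖h‖ := by
  rw [div_le_iff₀ ht]
  have := norm_add_le x ((t : 𝕜) • h)
  rw [norm_smul, norm_ofReal, abs_of_pos ht, hx] at this
  linarith

end normDirDeriv

section ussdGap

variable {U : Set X} (hU : ∀ x ∈ U, ‖x‖ = 1)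
include hU

theorem ussdGap_nonneg {t : ℝ} (ht : 0 < t) : 0 ≤ ussdGap 𝕜 U t := by
  refine Real.sSup_nonneg ?_
  rintro _ ⟨x, hx, h, -, rfl⟩
  exact sub_nonneg.2 (normDirDeriv_le_div h ht (hU x hx))

theorem le_ussdGap {t : ℝ} (ht : 0 < t) {x : X} (hx : x ∈ U) {h : X} (hh : ‖h‖ ≤ 1) :
    (‖x + (t : 𝕜) • h‖ - 1) / t - normDirDeriv 𝕜 x h ≤ ussdGap 𝕜 U t := by
  refine le_csSup ⟨2, ?_⟩ ⟨x, hx, h, hh, rfl⟩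
  rintro _ ⟨y, hy, k, hk, rfl⟩
  linarith [norm_add_smul_sub_one_div_le (𝕜 := 𝕜) k ht (hU y hy),
    neg_norm_le_normDirDeriv (𝕜 := 𝕜) k (hU y hy)]

theorem ussdGap_le_iff {t ε : ℝ} (ht : 0 < t) (hε : 0 ≤ ε) :
    ussdGap 𝕜 U t ≤ ε ↔ ∀ x ∈ U, ∀ h : X, ‖h‖ ≤ 1 →
      (‖x + (t : 𝕜) • h‖ - 1) / t - normDirDeriv 𝕜 x h ≤ ε := by
  refine ⟨fun hgap x hx h hh => (le_ussdGap hU ht hx hh).trans hgap, fun H => Real.sSup_le ?_ hε⟩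
  rintro _ ⟨x, hx, h, hh, rfl⟩
  exact H x hx h hh

theorem tendsto_ussdGap_iff : Tendsto (ussdGap 𝕜 U) (𝓝[>] 0) (𝓝 0) ↔ IsUSSDOn 𝕜 U := by
  have hpos : ∀ᶠ t : ℝ in 𝓝[>] 0, 0 < t := self_mem_nhdsWithin
  rw [tendsto_order]
  refine ⟨fun ⟨_, hlt⟩ ε hε => ?_, fun H => ⟨fun a ha => ?_, fun ε hε => ?_⟩⟩
  · filter_upwards [hlt ε hε, hpos] with t hgap ht
    exact (ussdGap_le_iff hU ht hε.le).1 hgap.le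
  · filter_upwards [hpos] with t ht using ha.trans_le (ussdGap_nonneg hU ht)
  · filter_upwards [H (ε / 2) (half_pos hε), hpos] with t hH ht
    exact ((ussdGap_le_iff hU ht (half_pos hε).le).2 hH).trans_lt (half_lt_self hε)

end ussdGap

theorem exists_apply_eq_one_norm_sub_sq {G : StrongDual 𝕜 X} {u : X} (hG : ‖G‖ = 1)
    (hGu : ‖G u‖ = 1) : ∃ g : StrongDual 𝕜 X, ‖g‖ = 1 ∧ g u = 1 ∧
      ‖G - g‖ ^ 2 = 2 * (1 - re (G u)) := by
  obtain ⟨c, hc, hcG⟩ := exists_norm_eq_one_mul_eq_norm (G u)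
  rw [hGu, ofReal_one] at hcG
  refine ⟨c • G, by rw [norm_smul, hc, hG, one_mul], by rw [smul_apply, smul_eq_mul, hcG], ?_⟩
  have hsub : 1 - c = c * (G u - 1) := by rw [mul_sub, hcG, mul_one]
  have hGg : G - c • G = (1 - c) • G := by module
  rw [hGg, norm_smul, hG, mul_one, hsub, norm_mul, hc, one_mul,
    norm_sub_one_sq_of_norm_eq_one hGu]

theorem HasBPBppRe.hasBPBpp {U : Set X} (H : HasBPBppRe 𝕜 U) : HasBPBpp 𝕜 U := by
  intro ε hε
  obtain ⟨η, hη, Hη⟩ := H ε hε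
  refine ⟨η, hη, fun f hf u hu hfu => ?_⟩
  obtain ⟨c, hc, hcf⟩ := exists_norm_eq_one_mul_eq_norm (f u)
  have hc0 : c ≠ 0 := norm_ne_zero_iff.1 (by rw [hc]; exact one_ne_zero)
  obtain ⟨g, hg, hgu, hfg⟩ := Hη (c • f) (by rw [norm_smul, hc, hf, one_mul]) u hu
    (by rwa [smul_apply, smul_eq_mul, hcf, ofReal_re])
  refine ⟨c⁻¹ • g, by rw [norm_smul, norm_inv, hc, hg, inv_one, one_mul],
    by rw [smul_apply, hgu, smul_eq_mul, mul_one, norm_inv, hc, inv_one], ?_⟩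
  have hfg' : f - c⁻¹ • g = c⁻¹ • (c • f - g) := by rw [smul_sub, inv_smul_smul₀ hc0]
  rwa [hfg', norm_smul, norm_inv, hc, inv_one, one_mul]

theorem HasBPBpp.hasBPBppRe {U : Set X} (hU : ∀ x ∈ U, ‖x‖ = 1) (H : HasBPBpp 𝕜 U) :
    HasBPBppRe 𝕜 U := by
  intro ε hε
  set ε' := min (ε / 2) (ε ^ 2 / 16)
  obtain ⟨η, hη, Hη⟩ := H ε' (by positivity)
  refine ⟨min η ε', by positivity, fun f hf u hu hfu => ?_⟩
  obtain ⟨G, hG, hGu, hfG⟩ := Hη f hf u hu <|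
    ((sub_le_sub_left (min_le_left η ε') 1).trans_lt hfu).trans_le (re_le_norm _)
  obtain ⟨g, hg, hgu, hGg⟩ := exists_apply_eq_one_norm_sub_sq hG hGu
  refine ⟨g, hg, hgu, ?_⟩
  have hre : re (f u) - re (G u) ≤ ‖f - G‖ := by
    simpa [hU u hu] using (f - G).re_apply_le_opNorm_mul u
  have hGg' : ‖G - g‖ < ε / 2 := by
    refine lt_of_pow_lt_pow_left₀ 2 (by positivity) ?_
    rw [hGg]
    nlinarith [min_le_right η ε', min_le_right (ε / 2) (ε ^ 2 / 16)]
  calc ‖f - g‖ ≤ ‖f - G‖ + ‖G - g‖ := norm_sub_le_norm_sub_add_norm_sub f G g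
    _ < ε / 2 + ε / 2 := add_lt_add (hfG.trans_le (min_le_left _ _)) hGg'
    _ = ε := add_halves ε

theorem IsUSSDOn.hasBPBppRe {U : Set X} (hU : ∀ x ∈ U, ‖x‖ = 1) (H : IsUSSDOn 𝕜 U) :
    HasBPBppRe 𝕜 U := by
  intro ε hε
  obtain ⟨t, hUt, ht⟩ := ((H (ε / 4) (by positivity)).and self_mem_nhdsWithin).exists
  refine ⟨t * (ε / 4), by positivity, fun f hf u hu hfu => ?_⟩
  have hu1 := hU u hu
  have hclose (h : X) (hh : ‖h‖ ≤ 1) : re (f h) < normDirDeriv 𝕜 u h + ε / 2 := by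
    have hquot := hUt u hu h hh
    rw [sub_le_iff_le_add, div_le_iff₀ ht] at hquot
    have hsupp : re (f (u + (t : 𝕜) • h)) ≤ ‖u + (t : 𝕜) • h‖ := by
      simpa [hf] using f.re_apply_le_opNorm_mul (u + (t : 𝕜) • h)
    rw [f.re_apply_add_smul] at hsupp
    nlinarith
  by_contra! hfar
  obtain ⟨h, hh, hsep⟩ := exists_forall_lt_re_sub_of_forall_lt_norm_sub u f (δ := ε / 2)
    fun g hg hgu => by linarith [hfar g (norm_eq_one_of_apply_eq_one hu1 hg hgu) hgu]
  have hτ : normDirDeriv 𝕜 u h ≤ re (f h) - ε / 2 :=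
    normDirDeriv_le h hu1 fun g hg hgu => by linarith [hsep g hg.le hgu]
  linarith [hclose h hh]

theorem HasBPBppRe.isUSSDOn {U : Set X} (hU : ∀ x ∈ U, ‖x‖ = 1) (H : HasBPBppRe 𝕜 U) :
    IsUSSDOn 𝕜 U := by
  intro ε hε
  obtain ⟨η, hη, Hη⟩ := H ε hε
  filter_upwards [Ioo_mem_nhdsGT (show (0 : ℝ) < min (η / 2) (1 / 2) by positivity)]
    with t ⟨ht, htη⟩ x hx h hh
  have hx1 := hU x hx
  have hth : ‖(t : 𝕜) • h‖ ≤ t := by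
    rw [norm_smul, norm_ofReal, abs_of_pos ht]
    exact mul_le_of_le_one_right ht.le hh
  have hlow : 1 - t ≤ ‖x + (t : 𝕜) • h‖ := by
    have := norm_sub_le (x + (t : 𝕜) • h) ((t : 𝕜) • h)
    rw [add_sub_cancel_right, hx1] at this
    linarith
  obtain ⟨F, hF, hFx⟩ :=
    exists_dual_vector 𝕜 (x + (t : 𝕜) • h) (by linarith [min_le_right (η / 2) (1 / 2)])
  have hsplit := F.re_apply_add_smul x h t
  rw [hFx, ofReal_re] at hsplit
  have hFx1 : re (F x) ≤ 1 := hF ▸ F.re_apply_le_opNorm hx1.le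
  have hFh1 : re (F h) ≤ 1 := hF ▸ F.re_apply_le_opNorm hh
  obtain ⟨g, hg, hgx, hFg⟩ := Hη F hF x hx (by nlinarith [min_le_left (η / 2) (1 / 2)])
  have hFgh : re ((F - g) h) ≤ ‖F - g‖ := (F - g).re_apply_le_opNorm hh
  calc (‖x + (t : 𝕜) • h‖ - 1) / t - normDirDeriv 𝕜 x h
      ≤ re (F h) - re (g h) := by
        gcongr
        · rw [div_le_iff₀ ht]; linarith
        · exact re_apply_le_normDirDeriv h hg hgx
    _ ≤ ε := by simpa using hFgh.trans hFg.le

end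

theorem stmt_0_general {𝕜 X : Type*} [RCLike 𝕜] [NormedAddCommGroup X] [NormedSpace 𝕜 X]
    (U : Set X) (hU : ∀ x ∈ U, ‖x‖ = 1) :
    Tendsto (fun t : ℝ =>
        sSup {r : ℝ | ∃ x ∈ U, ∃ h : X, ‖h‖ ≤ 1 ∧
          r = (‖x + (t : 𝕜) • h‖ - 1) / t -
            sSup {s : ℝ | ∃ f : X →L[𝕜] 𝕜, ‖f‖ = 1 ∧ f x = 1 ∧ s = RCLike.re (f h)}})
      (nhdsWithin 0 (Set.Ioi 0)) (nhds 0)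
    ↔
    ∀ ε > (0 : ℝ), ∃ η > (0 : ℝ), ∀ f : X →L[𝕜] 𝕜, ‖f‖ = 1 → ∀ u ∈ U, ‖f u‖ > 1 - η →
      ∃ g : X →L[𝕜] 𝕜, ‖g‖ = 1 ∧ ‖g u‖ = 1 ∧ ‖f - g‖ < ε := by
  change Tendsto (ussdGap 𝕜 U) _ _ ↔ HasBPBpp 𝕜 U
  rw [tendsto_ussdGap_iff hU]
  exact ⟨fun h => (h.hasBPBppRe hU).hasBPBpp, fun h => (h.hasBPBppRe hU).isUSSDOn hU⟩

/-- For a Banach space `X` over `𝕜 = ℝ` or `ℂ` and a subset `U` of its unit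
sphere, the norm of `X` is uniformly strongly subdifferentiable on `U`, i.e.
`lim_{t→0⁺} sup { (‖x+th‖−1)/t − τ(x,h) : h ∈ B_X, x ∈ U } = 0` where
`τ(x,h) = sup { Re f(h) : f ∈ S_{X*}, f(x)=1 }`, if and only if the pair `(X, 𝕜)` has the
Bishop–Phelps–Bollobás point property for the set `U`. -/
theorem stmt_0 {𝕜 X : Type*} [RCLike 𝕜] [NormedAddCommGroup X] [NormedSpace 𝕜 X]
    [CompleteSpace X] (U : Set X) (hU : ∀ x ∈ U, ‖x‖ = 1) :
    Tendsto (fun t : ℝ =>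
        sSup {r : ℝ | ∃ x ∈ U, ∃ h : X, ‖h‖ ≤ 1 ∧
          r = (‖x + (t : 𝕜) • h‖ - 1) / t -
            sSup {s : ℝ | ∃ f : X →L[𝕜] 𝕜, ‖f‖ = 1 ∧ f x = 1 ∧ s = RCLike.re (f h)}})
      (nhdsWithin 0 (Set.Ioi 0)) (nhds 0)
    ↔
    ∀ ε > (0 : ℝ), ∃ η > (0 : ℝ), ∀ f : X →L[𝕜] 𝕜, ‖f‖ = 1 → ∀ u ∈ U, ‖f u‖ > 1 - η →
      ∃ g : X →L[𝕜] 𝕜, ‖g‖ = 1 ∧ ‖g u‖ = 1 ∧ ‖f - g‖ < ε :=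
  stmt_0_general U hU
end

section
/- Let X and Y be Banach spaces and N ∈ ℕ. If Y has property β (with some constant ρ ∈ [0,1)) and the pair (X, 𝕂) has the N-homogeneous polynomial L_{p,p}, then the pair (X, Y) has the N-homogeneous polynomial L_{p,p}. -/
/-!
Let `P` be a norm-one polynomial with `‖P x‖` close to `1`. Since the family `g` is norming, some
scalar polynomial `p = g i ∘ P` almost attains its norm at `x`, so the scalar `L_{p,p}` gives a
norm-one `q` with `|q x| = 1` within `δ` of `p`. Correct `P` in the direction `y i` only:
`Q₀ = P + ((1 + μ) q - p) • y i`, so that `g i ∘ Q₀ = (1 + μ) q`. For `j ≠ i` the functional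
`g j` sees the correction only through `|g j (y i)| ≤ ρ`; choosing `μ` with `ρ (μ + δ) = μ`
keeps all of them below `1 + μ`. Hence `Q₀ / (1 + μ)` attains its norm one at `x` and lies
within `(1 + ρ) / (1 - ρ) · δ` of `P`.
-/

/-- The norm of the `N`-homogeneous polynomial `x ↦ A(x,…,x)` associated to a continuous
`N`-linear map `A`, namely `sup {‖A(x,…,x)‖ : ‖x‖ ≤ 1}`. -/
noncomputable def polyNorm {𝕜 X Z : Type*} [RCLike 𝕜] [NormedAddCommGroup X] [NormedSpace 𝕜 X]
    [NormedAddCommGroup Z] [NormedSpace 𝕜 Z] {N : ℕ}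
    (A : ContinuousMultilinearMap 𝕜 (fun _ : Fin N => X) Z) : ℝ :=
  sSup {r : ℝ | ∃ x : X, ‖x‖ ≤ 1 ∧ r = ‖A (fun _ => x)‖}

/-- The pair `(X, Z)` has the `N`-homogeneous polynomial `L_{p,p}`: for every `ε > 0` and every
unit vector `x` there is `η(ε,x) > 0` such that every norm-one `N`-homogeneous polynomial `P`
with `‖P(x)‖ > 1 − η` can be approximated within `ε` by a norm-one `N`-homogeneous polynomial
`Q` with `‖Q(x)‖ = 1`. -/
def PolyLpp (𝕜 X Z : Type*) [RCLike 𝕜] [NormedAddCommGroup X] [NormedSpace 𝕜 X]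
    [NormedAddCommGroup Z] [NormedSpace 𝕜 Z] (N : ℕ) : Prop :=
  ∀ ε > (0 : ℝ), ∀ x : X, ‖x‖ = 1 → ∃ η > (0 : ℝ),
    ∀ P : ContinuousMultilinearMap 𝕜 (fun _ : Fin N => X) Z, polyNorm P = 1 →
      ‖P (fun _ => x)‖ > 1 - η →
      ∃ Q : ContinuousMultilinearMap 𝕜 (fun _ : Fin N => X) Z,
        polyNorm Q = 1 ∧ ‖Q (fun _ => x)‖ = 1 ∧ polyNorm (Q - P) < ε

section PolyNorm

variable {𝕜 X Z : Type*} [RCLike 𝕜] [NormedAddCommGroup X] [NormedSpace 𝕜 X]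
  [NormedAddCommGroup Z] [NormedSpace 𝕜 Z] {N : ℕ}

lemma bddAbove_polyNorm_set (A : ContinuousMultilinearMap 𝕜 (fun _ : Fin N => X) Z) :
    BddAbove {r : ℝ | ∃ x : X, ‖x‖ ≤ 1 ∧ r = ‖A (fun _ => x)‖} := by
  refine ⟨‖A‖, ?_⟩
  rintro _ ⟨x, hx, rfl⟩
  calc ‖A (fun _ => x)‖ ≤ ‖A‖ * ∏ _i : Fin N, ‖x‖ := A.le_opNorm _
    _ ≤ ‖A‖ * 1 := by gcongr; exact Finset.prod_le_one (fun _ _ => norm_nonneg x) fun _ _ => hx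
    _ = ‖A‖ := mul_one _

lemma norm_apply_le_polyNorm (A : ContinuousMultilinearMap 𝕜 (fun _ : Fin N => X) Z) {x : X}
    (hx : ‖x‖ ≤ 1) : ‖A (fun _ => x)‖ ≤ polyNorm A :=
  le_csSup (bddAbove_polyNorm_set A) ⟨x, hx, rfl⟩

lemma polyNorm_nonneg (A : ContinuousMultilinearMap 𝕜 (fun _ : Fin N => X) Z) :
    0 ≤ polyNorm A :=
  (norm_nonneg _).trans (norm_apply_le_polyNorm A (x := 0) (by simp))

lemma polyNorm_le_of_forall {A : ContinuousMultilinearMap 𝕜 (fun _ : Fin N => X) Z} {C : ℝ}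
    (hC : 0 ≤ C) (h : ∀ x : X, ‖x‖ ≤ 1 → ‖A (fun _ => x)‖ ≤ C) : polyNorm A ≤ C :=
  Real.sSup_le (by rintro _ ⟨x, hx, rfl⟩; exact h x hx) hC

lemma polyNorm_eq_of_forall {A : ContinuousMultilinearMap 𝕜 (fun _ : Fin N => X) Z} {C : ℝ}
    (h : ∀ x : X, ‖x‖ ≤ 1 → ‖A (fun _ => x)‖ ≤ C) {x : X} (hx : ‖x‖ ≤ 1)
    (hAx : ‖A (fun _ => x)‖ = C) : polyNorm A = C :=
  le_antisymm (polyNorm_le_of_forall (hAx ▸ norm_nonneg _) h)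
    (hAx ▸ norm_apply_le_polyNorm A hx)

lemma polyNorm_add_le (A B : ContinuousMultilinearMap 𝕜 (fun _ : Fin N => X) Z) :
    polyNorm (A + B) ≤ polyNorm A + polyNorm B :=
  polyNorm_le_of_forall (add_nonneg (polyNorm_nonneg A) (polyNorm_nonneg B)) fun _ hx =>
    (norm_add_le _ _).trans (add_le_add (norm_apply_le_polyNorm A hx) (norm_apply_le_polyNorm B hx))

lemma polyNorm_smul_le (c : 𝕜) (A : ContinuousMultilinearMap 𝕜 (fun _ : Fin N => X) Z) :
    polyNorm (c • A) ≤ ‖c‖ * polyNorm A :=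
  polyNorm_le_of_forall (mul_nonneg (norm_nonneg c) (polyNorm_nonneg A)) fun _ hx => by
    rw [smul_apply, norm_smul]
    exact mul_le_mul_of_nonneg_left (norm_apply_le_polyNorm A hx) (norm_nonneg c)

lemma polyNorm_smul (c : 𝕜) (A : ContinuousMultilinearMap 𝕜 (fun _ : Fin N => X) Z) :
    polyNorm (c • A) = ‖c‖ * polyNorm A := by
  refine le_antisymm (polyNorm_smul_le c A) ?_
  rcases eq_or_ne c 0 with rfl | hc
  · simpa using polyNorm_nonneg ((0 : 𝕜) • A)
  · have h := polyNorm_smul_le c⁻¹ (c • A)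
    rw [inv_smul_smul₀ hc, norm_inv] at h
    rwa [← le_inv_mul_iff₀ (norm_pos_iff.2 hc)]

lemma polyNorm_ofReal_smul {s : ℝ} (hs : 0 ≤ s)
    (A : ContinuousMultilinearMap 𝕜 (fun _ : Fin N => X) Z) :
    polyNorm ((s : 𝕜) • A) = s * polyNorm A := by
  rw [polyNorm_smul, RCLike.norm_ofReal, abs_of_nonneg hs]

lemma polyNorm_smulRight_le (A : ContinuousMultilinearMap 𝕜 (fun _ : Fin N => X) 𝕜) (v : Z) :
    polyNorm (A.smulRight v) ≤ polyNorm A * ‖v‖ :=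
  polyNorm_le_of_forall (mul_nonneg (polyNorm_nonneg A) (norm_nonneg v)) fun _ hx => by
    rw [ContinuousMultilinearMap.smulRight_apply, norm_smul]
    exact mul_le_mul_of_nonneg_right (norm_apply_le_polyNorm A hx) (norm_nonneg v)

lemma polyNorm_ofReal_inv_smul_self {A : ContinuousMultilinearMap 𝕜 (fun _ : Fin N => X) Z}
    (hA : polyNorm A ≠ 0) : polyNorm ((((polyNorm A)⁻¹ : ℝ) : 𝕜) • A) = 1 := by
  rw [polyNorm_ofReal_smul (inv_nonneg.2 (polyNorm_nonneg A)), inv_mul_cancel₀ hA]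

lemma polyNorm_ofReal_inv_smul_self_sub {A : ContinuousMultilinearMap 𝕜 (fun _ : Fin N => X) Z}
    (hA : polyNorm A ≠ 0) :
    polyNorm ((((polyNorm A)⁻¹ : ℝ) : 𝕜) • A - A) = |1 - polyNorm A| := by
  have h : (((polyNorm A)⁻¹ : ℝ) : 𝕜) • A - A = (((polyNorm A)⁻¹ - 1 : ℝ) : 𝕜) • A := by
    rw [RCLike.ofReal_sub, sub_smul, RCLike.ofReal_one, one_smul]
  calc polyNorm ((((polyNorm A)⁻¹ : ℝ) : 𝕜) • A - A) = |(polyNorm A)⁻¹ - 1| * polyNorm A := by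
        rw [h, polyNorm_smul, RCLike.norm_ofReal]
    _ = |((polyNorm A)⁻¹ - 1) * polyNorm A| := by rw [abs_mul, abs_of_nonneg (polyNorm_nonneg A)]
    _ = |1 - polyNorm A| := by rw [sub_mul, inv_mul_cancel₀ hA, one_mul]

lemma exists_polyNorm_eq_one_of_norm_apply_eq
    {A : ContinuousMultilinearMap 𝕜 (fun _ : Fin N => X) Z} (hA : polyNorm A ≠ 0) {x : X}
    (hAx : ‖A (fun _ => x)‖ = polyNorm A) :
    ∃ Q : ContinuousMultilinearMap 𝕜 (fun _ : Fin N => X) Z,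
      polyNorm Q = 1 ∧ ‖Q (fun _ => x)‖ = 1 ∧ polyNorm (Q - A) = |1 - polyNorm A| := by
  refine ⟨(((polyNorm A)⁻¹ : ℝ) : 𝕜) • A, polyNorm_ofReal_inv_smul_self hA, ?_,
    polyNorm_ofReal_inv_smul_self_sub hA⟩
  rw [smul_apply, norm_smul, RCLike.norm_ofReal, abs_of_nonneg (inv_nonneg.2 (polyNorm_nonneg A)),
    hAx, inv_mul_cancel₀ hA]

theorem PolyLpp.exists_near_of_polyNorm_le_one (hL : PolyLpp 𝕜 X Z N) {ε : ℝ} (hε : 0 < ε) {x : X} (hx : ‖x‖ = 1) :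
    ∃ η > (0 : ℝ), ∀ P : ContinuousMultilinearMap 𝕜 (fun _ : Fin N => X) Z, polyNorm P ≤ 1 →
      1 - η < ‖P (fun _ => x)‖ →
      ∃ Q : ContinuousMultilinearMap 𝕜 (fun _ : Fin N => X) Z,
        polyNorm Q = 1 ∧ ‖Q (fun _ => x)‖ = 1 ∧ polyNorm (Q - P) < ε := by
  obtain ⟨η₀, hη₀, hL⟩ := hL (ε / 2) (half_pos hε) x hx
  refine ⟨min η₀ (min (ε / 2) 1), lt_min hη₀ (lt_min (half_pos hε) one_pos), fun P hP hPx => ?_⟩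
  have hη := min_le_left η₀ (min (ε / 2) 1)
  have hηε := (min_le_right η₀ _).trans (min_le_left (ε / 2) 1)
  have hη1 := (min_le_right η₀ _).trans (min_le_right (ε / 2) 1)
  set t := polyNorm P
  have hPt : ‖P (fun _ => x)‖ ≤ t := norm_apply_le_polyNorm P hx.le
  have ht0 : 0 < t := by linarith
  set P' := ((t⁻¹ : ℝ) : 𝕜) • P
  have hP' : polyNorm P' = 1 := polyNorm_ofReal_inv_smul_self ht0.ne'
  have hP'x : ‖P' (fun _ => x)‖ = t⁻¹ * ‖P (fun _ => x)‖ := by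
    rw [smul_apply, norm_smul, RCLike.norm_ofReal, abs_of_pos (inv_pos.2 ht0)]
  have hP'P : polyNorm (P' - P) = 1 - t :=
    (polyNorm_ofReal_inv_smul_self_sub ht0.ne').trans (abs_of_nonneg (sub_nonneg.2 hP))
  obtain ⟨Q, hQ, hQx, hQP'⟩ := hL P' hP' <| by
    rw [hP'x]
    linarith [le_mul_of_one_le_left (norm_nonneg (P fun _ => x)) ((one_le_inv₀ ht0).2 hP)]
  refine ⟨Q, hQ, hQx, ?_⟩
  calc polyNorm (Q - P) = polyNorm ((Q - P') + (P' - P)) := by rw [sub_add_sub_cancel]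
    _ ≤ polyNorm (Q - P') + polyNorm (P' - P) := polyNorm_add_le _ _
    _ < ε := by linarith

end PolyNorm

section PropertyBeta

variable {𝕜 X Y I : Type*} [RCLike 𝕜] [NormedAddCommGroup X] [NormedSpace 𝕜 X]
  [NormedAddCommGroup Y] [NormedSpace 𝕜 Y] {N : ℕ} {ρ : ℝ} {y : I → Y} {g : I → Y →L[𝕜] 𝕜}

lemma norm_apply_le_of_isLUB (hnorm : ∀ z : Y, IsLUB {r : ℝ | ∃ i, r = ‖g i z‖} ‖z‖) (i : I)
    (w : Y) : ‖g i w‖ ≤ ‖w‖ :=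
  (hnorm w).1 ⟨i, rfl⟩

lemma norm_add_smul_le_max (hoff : ∀ i j, i ≠ j → ‖g i (y j)‖ ≤ ρ)
    (hnorm : ∀ z : Y, IsLUB {r : ℝ | ∃ i, r = ‖g i z‖} ‖z‖) (i : I) (w : Y) (r : 𝕜) :
    ‖w + r • y i‖ ≤ max ‖g i (w + r • y i)‖ (‖w‖ + ρ * ‖r‖) := by
  refine (hnorm _).2 ?_
  rintro _ ⟨j, rfl⟩
  rcases eq_or_ne j i with rfl | hji
  · exact le_max_left _ _
  · refine le_max_of_le_right ?_
    calc ‖g j (w + r • y i)‖ = ‖g j w + r * g j (y i)‖ := by rw [map_add, map_smul, smul_eq_mul]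
      _ ≤ ‖g j w‖ + ‖r‖ * ‖g j (y i)‖ := (norm_add_le _ _).trans_eq (by rw [norm_mul])
      _ ≤ ‖w‖ + ‖r‖ * ρ := by
          gcongr
          exacts [norm_apply_le_of_isLUB hnorm j w, hoff j i hji]
      _ = ‖w‖ + ρ * ‖r‖ := by ring

theorem exists_polyNorm_eq_norm_apply_near_of_isLUB (hρ0 : 0 ≤ ρ)
    (hgy : ∀ i, g i (y i) = 1) (hoff : ∀ i j, i ≠ j → ‖g i (y j)‖ ≤ ρ)
    (hnorm : ∀ z : Y, IsLUB {r : ℝ | ∃ i, r = ‖g i z‖} ‖z‖) {x : X} (hx : ‖x‖ ≤ 1)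
    {P : ContinuousMultilinearMap 𝕜 (fun _ : Fin N => X) Y} (hP : polyNorm P ≤ 1)
    {i : I} (hyi : ‖y i‖ ≤ 1) {q : ContinuousMultilinearMap 𝕜 (fun _ : Fin N => X) 𝕜}
    (hq : polyNorm q ≤ 1) (hqx : ‖q (fun _ => x)‖ = 1) {δ : ℝ}
    (hqP : polyNorm (q - (g i).compContinuousMultilinearMap P) ≤ δ) {μ : ℝ} (hμ0 : 0 ≤ μ)
    (hμ : ρ * (μ + δ) ≤ μ) :
    ∃ Q₀ : ContinuousMultilinearMap 𝕜 (fun _ : Fin N => X) Y,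
      polyNorm Q₀ = 1 + μ ∧ ‖Q₀ (fun _ => x)‖ = 1 + μ ∧ polyNorm (Q₀ - P) ≤ μ + δ := by
  set a : 𝕜 := ((1 + μ : ℝ) : 𝕜)
  have ha : ‖a‖ = 1 + μ := by rw [RCLike.norm_ofReal, abs_of_nonneg (by linarith)]
  set R := a • q - (g i).compContinuousMultilinearMap P
  have hR : polyNorm R ≤ μ + δ := by
    have : R = ((μ : ℝ) : 𝕜) • q + (q - (g i).compContinuousMultilinearMap P) := by
      simp only [R, a]; push_cast; module
    rw [this]
    refine (polyNorm_add_le _ _).trans (add_le_add ?_ hqP)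
    rw [polyNorm_ofReal_smul hμ0]
    exact mul_le_of_le_one_right hμ0 hq
  set Q₀ := P + R.smulRight (y i)
  have hQ₀_apply : ∀ z : X, Q₀ (fun _ => z) = P (fun _ => z) + R (fun _ => z) • y i := fun _ => rfl
  have hgQ₀ : ∀ z : X, ‖g i (Q₀ (fun _ => z))‖ = (1 + μ) * ‖q (fun _ => z)‖ := fun z => by
    rw [← ha, ← norm_mul]
    simp [Q₀, R, hgy]
  have hQ₀ : ∀ z : X, ‖z‖ ≤ 1 → ‖Q₀ (fun _ => z)‖ ≤ 1 + μ := fun z hz => by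
    rw [hQ₀_apply]
    refine (norm_add_smul_le_max hoff hnorm i _ _).trans (max_le ?_ ?_)
    · rw [← hQ₀_apply, hgQ₀]
      exact mul_le_of_le_one_right (by linarith) ((norm_apply_le_polyNorm q hz).trans hq)
    · calc ‖P (fun _ => z)‖ + ρ * ‖R (fun _ => z)‖ ≤ 1 + ρ * (μ + δ) := by
            gcongr
            exacts [(norm_apply_le_polyNorm P hz).trans hP, (norm_apply_le_polyNorm R hz).trans hR]
        _ ≤ 1 + μ := by linarith
  have hQ₀x : ‖Q₀ (fun _ => x)‖ = 1 + μ := by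
    refine le_antisymm (hQ₀ x hx) ?_
    calc 1 + μ = ‖g i (Q₀ (fun _ => x))‖ := by rw [hgQ₀, hqx, mul_one]
      _ ≤ ‖Q₀ (fun _ => x)‖ := norm_apply_le_of_isLUB hnorm i _
  refine ⟨Q₀, polyNorm_eq_of_forall hQ₀ hx hQ₀x, hQ₀x, ?_⟩
  rw [add_sub_cancel_left]
  exact (polyNorm_smulRight_le R (y i)).trans
    ((mul_le_of_le_one_right (polyNorm_nonneg R) hyi).trans hR)

theorem exists_attains_polyNorm_near_of_isLUB (hρ0 : 0 ≤ ρ) (hρ1 : ρ < 1)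
    (hgy : ∀ i, g i (y i) = 1) (hoff : ∀ i j, i ≠ j → ‖g i (y j)‖ ≤ ρ)
    (hnorm : ∀ z : Y, IsLUB {r : ℝ | ∃ i, r = ‖g i z‖} ‖z‖) {x : X} (hx : ‖x‖ ≤ 1)
    {P : ContinuousMultilinearMap 𝕜 (fun _ : Fin N => X) Y} (hP : polyNorm P ≤ 1)
    {i : I} (hyi : ‖y i‖ ≤ 1) {q : ContinuousMultilinearMap 𝕜 (fun _ : Fin N => X) 𝕜}
    (hq : polyNorm q ≤ 1) (hqx : ‖q (fun _ => x)‖ = 1) {δ : ℝ}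
    (hqP : polyNorm (q - (g i).compContinuousMultilinearMap P) ≤ δ) :
    ∃ Q : ContinuousMultilinearMap 𝕜 (fun _ : Fin N => X) Y,
      polyNorm Q = 1 ∧ ‖Q (fun _ => x)‖ = 1 ∧ polyNorm (Q - P) ≤ (1 + ρ) / (1 - ρ) * δ := by
  have hδ : 0 ≤ δ := (polyNorm_nonneg _).trans hqP
  have hρ : 1 - ρ ≠ 0 := (sub_pos.2 hρ1).ne'
  set μ := ρ * δ / (1 - ρ) with hμ_def
  have hμ0 : 0 ≤ μ := div_nonneg (mul_nonneg hρ0 hδ) (by linarith)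
  have hμ : ρ * (μ + δ) = μ := by rw [hμ_def]; field_simp; ring
  obtain ⟨Q₀, hQ₀, hQ₀x, hQ₀P⟩ := exists_polyNorm_eq_norm_apply_near_of_isLUB hρ0 hgy hoff hnorm
    hx hP hyi hq hqx hqP hμ0 hμ.le
  obtain ⟨Q, hQ, hQx, hQQ₀⟩ :=
    exists_polyNorm_eq_one_of_norm_apply_eq (by linarith : polyNorm Q₀ ≠ 0) (hQ₀x.trans hQ₀.symm)
  refine ⟨Q, hQ, hQx, ?_⟩
  calc polyNorm (Q - P) = polyNorm ((Q - Q₀) + (Q₀ - P)) := by rw [sub_add_sub_cancel]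
    _ ≤ |1 - (1 + μ)| + (μ + δ) := by
        rw [← hQ₀, ← hQQ₀]
        exact (polyNorm_add_le _ _).trans (add_le_add le_rfl hQ₀P)
    _ = (1 + ρ) / (1 - ρ) * δ := by
        rw [sub_add_cancel_left, abs_neg, abs_of_nonneg hμ0, hμ_def]
        field_simp
        ring

end PropertyBeta

theorem stmt_7_general {𝕜 X Y : Type*} [RCLike 𝕜] [NormedAddCommGroup X] [NormedSpace 𝕜 X]
    [NormedAddCommGroup Y] [NormedSpace 𝕜 Y]
    (N : ℕ) {I : Type*} (ρ : ℝ) (hρ0 : 0 ≤ ρ) (hρ1 : ρ < 1)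
    (y : I → Y) (g : I → (Y →L[𝕜] 𝕜))
    (hy : ∀ i, ‖y i‖ = 1) (hgy : ∀ i, g i (y i) = 1)
    (hoff : ∀ i j, i ≠ j → ‖g i (y j)‖ ≤ ρ)
    (hnorm : ∀ z : Y, IsLUB {r : ℝ | ∃ i, r = ‖g i z‖} ‖z‖)
    (hX : PolyLpp 𝕜 X 𝕜 N) :
    PolyLpp 𝕜 X Y N := by
  intro ε hε x hx
  have hρ : 0 < 1 - ρ := sub_pos.2 hρ1
  set δ := (1 - ρ) / (1 + ρ) * (ε / 2)
  have hδ : 0 < δ := by positivity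
  have hδε : (1 + ρ) / (1 - ρ) * δ < ε := by
    rw [← mul_assoc, div_mul_div_comm, mul_comm (1 + ρ), div_self (by positivity), one_mul]
    linarith
  obtain ⟨η, hη, hq⟩ := hX.exists_near_of_polyNorm_le_one hδ hx
  refine ⟨η, hη, fun P hP hPx => ?_⟩
  obtain ⟨_, ⟨i, rfl⟩, hi, -⟩ := (hnorm (P fun _ => x)).exists_between hPx
  have hp : polyNorm ((g i).compContinuousMultilinearMap P) ≤ 1 :=
    polyNorm_le_of_forall zero_le_one fun z hz =>
      (norm_apply_le_of_isLUB hnorm i _).trans (hP ▸ norm_apply_le_polyNorm P hz)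
  obtain ⟨q, hq1, hqx, hqp⟩ := hq _ hp hi
  obtain ⟨Q, hQ1, hQx, hQP⟩ := exists_attains_polyNorm_near_of_isLUB hρ0 hρ1 hgy hoff hnorm
    hx.le hP.le (hy i).le hq1.le hqx hqp.le
  exact ⟨Q, hQ1, hQx, hQP.trans_lt hδε⟩

/-- If `Y` has property β with constant `ρ ∈ [0,1)` (witnessed by families
`(y i)` and `(g i)`) and the pair `(X, 𝕜)` has the `N`-homogeneous polynomial `L_{p,p}`, then
the pair `(X, Y)` has the `N`-homogeneous polynomial `L_{p,p}`. -/
theorem stmt_7 {𝕜 X Y : Type*} [RCLike 𝕜] [NormedAddCommGroup X] [NormedSpace 𝕜 X]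
    [CompleteSpace X] [NormedAddCommGroup Y] [NormedSpace 𝕜 Y] [CompleteSpace Y]
    (N : ℕ) {I : Type*} (ρ : ℝ) (hρ0 : 0 ≤ ρ) (hρ1 : ρ < 1)
    (y : I → Y) (g : I → (Y →L[𝕜] 𝕜))
    (hy : ∀ i, ‖y i‖ = 1) (hg : ∀ i, ‖g i‖ = 1) (hgy : ∀ i, g i (y i) = 1)
    (hoff : ∀ i j, i ≠ j → ‖g i (y j)‖ ≤ ρ)
    (hnorm : ∀ z : Y, IsLUB {r : ℝ | ∃ i, r = ‖g i z‖} ‖z‖)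
    (hX : PolyLpp 𝕜 X 𝕜 N) :
    PolyLpp 𝕜 X Y N :=
  stmt_7_general N ρ hρ0 hρ1 y g hy hgy hoff hnorm hX
end

section
/- Let 𝕂 = ℝ or ℂ and let ℓ₂² = 𝕂² be the two-dimensional Hilbert space. The pair (ℓ₂², 𝕂) fails the bilinear symmetric Bishop–Phelps–Bollobás point property: there exists ε>0 such that for every η>0 there exist a continuous symmetric bilinear form A on ℓ₂² with ‖A‖=1 and unit vectors x, y with |A(x,y)| > 1−η, such that every continuous symmetric bilinear form B with ‖B‖=1 and |B(x,y)|=1 satisfies ‖B−A‖ ≥ ε. -/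
/-!
Take for `A` the bilinear dot product `A(u, v) = u₀v₀ + u₁v₁` and `x = (p, q)`, `y = (p, -q)` with
`p² + q² = 1`, so that `A(x, y) = p² - q²` is close to `1` when `q` is small. For a symmetric `B`,
`B(x, y) = p² B(e₀, e₀) - q² B(e₁, e₁)` is a proper convex combination of two points of the closed
unit disc; by strict convexity `|B(x, y)| = 1` forces `B(e₁, e₁) = -B(e₀, e₀)`. Then
`(B - A)(e₀, e₀) + (B - A)(e₁, e₁) = -2`, hence `‖B - A‖ ≥ 1`.
-/

open EuclideanSpace

lemma Function.update_pair_zero {α : Type*} (u v w : α) : Function.update ![u, v] 0 w = ![w, v] := by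
  funext i; fin_cases i <;> rfl

lemma Function.update_pair_one {α : Type*} (u v w : α) : Function.update ![u, v] 1 w = ![u, w] := by
  funext i; fin_cases i <;> rfl

lemma eq_neg_of_norm_sub_smul_eq_one {E : Type*} [NormedAddCommGroup E] [NormedSpace ℝ E]
    [StrictConvexSpace ℝ E] {a d : E} {t : ℝ} (ht₀ : 0 < t) (ht₁ : t < 1) (ha : ‖a‖ ≤ 1)
    (hd : ‖d‖ ≤ 1) (h : ‖(1 - t) • a - t • d‖ = 1) : d = -a := by
  by_contra hne
  refine (norm_combo_lt_of_ne ha (norm_neg d ▸ hd) (fun h' => hne ?_) (sub_pos.2 ht₁) ht₀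
    (sub_add_cancel 1 t)).ne ?_
  · rw [h', neg_neg]
  · rwa [smul_neg, ← sub_eq_add_neg]

namespace ContinuousMultilinearMap

section NormedField

variable {𝕜 E F : Type*} [NontriviallyNormedField 𝕜] [SeminormedAddCommGroup E] [NormedSpace 𝕜 E]
  [SeminormedAddCommGroup F] [NormedSpace 𝕜 F] (f : ContinuousMultilinearMap 𝕜 (fun _ : Fin 2 => E) F)

lemma map_add_fst (u u' v : E) : f ![u + u', v] = f ![u, v] + f ![u', v] := by
  simpa only [Function.update_pair_zero] using f.map_update_add ![u, v] 0 u u'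

lemma map_sub_snd (u v v' : E) : f ![u, v - v'] = f ![u, v] - f ![u, v'] := by
  simpa only [Function.update_pair_one] using f.map_update_sub ![u, v] 1 v v'

lemma map_smul_smul (a b : 𝕜) (u v : E) : f ![a • u, b • v] = (a * b) • f ![u, v] := by
  have ha := f.map_update_smul ![u, b • v] 0 a u
  have hb := f.map_update_smul ![u, v] 1 b v
  simp only [Function.update_pair_zero, Function.update_pair_one] at ha hb
  rw [ha, hb, smul_smul]

lemma map_add_sub_of_symm (hf : ∀ u v, f ![u, v] = f ![v, u]) (u v : E) :
    f ![u + v, u - v] = f ![u, u] - f ![v, v] := by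
  rw [map_add_fst, map_sub_snd, map_sub_snd, hf v u]
  abel

lemma norm_map_pair_le (u v : E) : ‖f ![u, v]‖ ≤ ‖f‖ * ‖u‖ * ‖v‖ := by
  simpa [Fin.prod_univ_two, mul_assoc] using f.le_opNorm ![u, v]

end NormedField

lemma map_ofReal_smul_add_sub_of_symm {𝕜 E : Type*} [RCLike 𝕜] [SeminormedAddCommGroup E]
    [NormedSpace 𝕜 E] (f : ContinuousMultilinearMap 𝕜 (fun _ : Fin 2 => E) 𝕜)
    (hf : ∀ u v, f ![u, v] = f ![v, u]) (p q : ℝ) (u v : E) :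
    f ![(p : 𝕜) • u + (q : 𝕜) • v, (p : 𝕜) • u - (q : 𝕜) • v] =
      ((p ^ 2 : ℝ) : 𝕜) * f ![u, u] - ((q ^ 2 : ℝ) : 𝕜) * f ![v, v] := by
  rw [f.map_add_sub_of_symm hf, f.map_smul_smul, f.map_smul_smul, smul_eq_mul, smul_eq_mul]
  push_cast
  ring

end ContinuousMultilinearMap

section RCLike

variable {𝕜 : Type*} [RCLike 𝕜]

lemma EuclideanSpace.norm_ofReal_smul_single_add_eq_one {p q : ℝ} (h : p ^ 2 + q ^ 2 = 1) :
    ‖(p : 𝕜) • single (0 : Fin 2) (1 : 𝕜) + (q : 𝕜) • single 1 1‖ = 1 := by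
  simp [EuclideanSpace.norm_eq, Fin.sum_univ_two, h]

/-- The dot product `∑ i, u i * v i`, with no complex conjugation, so that it is bilinear. -/
noncomputable def dotForm (𝕜 : Type*) [RCLike 𝕜] (ι : Type*) [Fintype ι] :
    ContinuousMultilinearMap 𝕜 (fun _ : Fin 2 => EuclideanSpace 𝕜 ι) 𝕜 :=
  ∑ i, (ContinuousMultilinearMap.mkPiAlgebraFin 𝕜 2 𝕜).compContinuousLinearMap
    (fun _ => EuclideanSpace.proj i)

section dotForm

variable {ι : Type*} [Fintype ι]

lemma dotForm_apply (m : Fin 2 → EuclideanSpace 𝕜 ι) : dotForm 𝕜 ι m = ∑ i, m 0 i * m 1 i := by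
  simp [dotForm, List.ofFn_succ]

lemma dotForm_comm (u v : EuclideanSpace 𝕜 ι) : dotForm 𝕜 ι ![u, v] = dotForm 𝕜 ι ![v, u] := by
  simp [dotForm_apply, mul_comm]

lemma dotForm_single_single [DecidableEq ι] (i : ι) :
    dotForm 𝕜 ι ![single i (1 : 𝕜), single i 1] = 1 := by
  simp [dotForm_apply]

lemma norm_dotForm_le : ‖dotForm 𝕜 ι‖ ≤ 1 := by
  refine ContinuousMultilinearMap.opNorm_le_bound zero_le_one fun m => ?_
  rw [dotForm_apply, one_mul, Fin.prod_univ_two, EuclideanSpace.norm_eq, EuclideanSpace.norm_eq]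
  calc ‖∑ i, m 0 i * m 1 i‖ ≤ ∑ i, ‖m 0 i‖ * ‖m 1 i‖ := by
        simpa only [norm_mul] using norm_sum_le Finset.univ fun i => m 0 i * m 1 i
    _ ≤ _ := Real.sum_mul_le_sqrt_mul_sqrt _ _ _

lemma norm_dotForm [Nonempty ι] : ‖dotForm 𝕜 ι‖ = 1 := by
  classical
  refine norm_dotForm_le.antisymm ?_
  have h := (dotForm 𝕜 ι).norm_map_pair_le (single (Classical.arbitrary ι) 1)
    (single (Classical.arbitrary ι) 1)
  simpa [dotForm_single_single] using h

end dotForm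

theorem one_le_norm_sub_dotForm {p q : ℝ} (hp : p ≠ 0) (hq : q ≠ 0) (hpq : p ^ 2 + q ^ 2 = 1)
    {B : ContinuousMultilinearMap 𝕜 (fun _ : Fin 2 => EuclideanSpace 𝕜 (Fin 2)) 𝕜}
    (hB_symm : ∀ u v, B ![u, v] = B ![v, u]) (hB : ‖B‖ ≤ 1)
    (hBxy : ‖B ![(p : 𝕜) • single 0 1 + (q : 𝕜) • single 1 1,
      (p : 𝕜) • single 0 1 - (q : 𝕜) • single 1 1]‖ = 1) :
    1 ≤ ‖B - dotForm 𝕜 (Fin 2)‖ := by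
  set e₀ : EuclideanSpace 𝕜 (Fin 2) := single 0 1
  set e₁ : EuclideanSpace 𝕜 (Fin 2) := single 1 1
  have hdiag (f : ContinuousMultilinearMap 𝕜 (fun _ : Fin 2 => EuclideanSpace 𝕜 (Fin 2)) 𝕜)
      (i : Fin 2) : ‖f ![single i 1, single i 1]‖ ≤ ‖f‖ := by
    simpa using f.norm_map_pair_le (single i 1) (single i 1)
  have hB_e₁ : B ![e₁, e₁] = -B ![e₀, e₀] := by
    refine eq_neg_of_norm_sub_smul_eq_one (t := q ^ 2) (by positivity)
      (by linarith [sq_pos_of_ne_zero hp]) ((hdiag B 0).trans hB) ((hdiag B 1).trans hB) ?_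
    rwa [B.map_ofReal_smul_add_sub_of_symm hB_symm, ← RCLike.real_smul_eq_coe_mul,
      ← RCLike.real_smul_eq_coe_mul, eq_sub_of_add_eq hpq] at hBxy
  have h_sum : (B - dotForm 𝕜 (Fin 2)) ![e₀, e₀] + (B - dotForm 𝕜 (Fin 2)) ![e₁, e₁] = -2 := by
    simp only [sub_apply, hB_e₁, e₀, e₁, dotForm_single_single]
    ring
  calc (1 : ℝ) = ‖(-2 : 𝕜)‖ / 2 := by simp
    _ ≤ (‖(B - dotForm 𝕜 (Fin 2)) ![e₀, e₀]‖ + ‖(B - dotForm 𝕜 (Fin 2)) ![e₁, e₁]‖) / 2 := by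
      rw [← h_sum]; gcongr; exact norm_add_le _ _
    _ ≤ ‖B - dotForm 𝕜 (Fin 2)‖ := by
      linarith [hdiag (B - dotForm 𝕜 (Fin 2)) 0, hdiag (B - dotForm 𝕜 (Fin 2)) 1]

end RCLike

/-- The pair `(ℓ₂², 𝕜)` fails the bilinear symmetric Bishop–Phelps–Bollobás
point property: there is `ε > 0` such that for every `η > 0` there are a norm-one symmetric
continuous bilinear form `A` on `ℓ₂²` and unit vectors `x, y` with `|A(x,y)| > 1 − η`, such
that every norm-one symmetric continuous bilinear form `B` with `|B(x,y)| = 1` satisfies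
`‖B − A‖ ≥ ε`. -/
theorem stmt_10 (𝕜 : Type*) [RCLike 𝕜] :
    ∃ ε > (0 : ℝ), ∀ η > (0 : ℝ),
      ∃ (A : ContinuousMultilinearMap 𝕜 (fun _ : Fin 2 => EuclideanSpace 𝕜 (Fin 2)) 𝕜)
        (x y : EuclideanSpace 𝕜 (Fin 2)),
        (∀ u v : EuclideanSpace 𝕜 (Fin 2), A ![u, v] = A ![v, u]) ∧
        ‖A‖ = 1 ∧ ‖x‖ = 1 ∧ ‖y‖ = 1 ∧ ‖A ![x, y]‖ > 1 - η ∧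
        ∀ B : ContinuousMultilinearMap 𝕜 (fun _ : Fin 2 => EuclideanSpace 𝕜 (Fin 2)) 𝕜,
          (∀ u v : EuclideanSpace 𝕜 (Fin 2), B ![u, v] = B ![v, u]) →
          ‖B‖ = 1 → ‖B ![x, y]‖ = 1 → ε ≤ ‖B - A‖ := by
  refine ⟨1, one_pos, fun η hη => ?_⟩
  obtain ⟨t, ht₀, ht⟩ := exists_between (lt_min (half_pos hη) one_half_pos)
  obtain ⟨htη, ht_half⟩ := lt_min_iff.1 ht
  have hp : √(1 - t) ^ 2 = 1 - t := Real.sq_sqrt (by linarith)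
  have hq : √t ^ 2 = t := Real.sq_sqrt ht₀.le
  have hpq : √(1 - t) ^ 2 + √t ^ 2 = 1 := by rw [hp, hq]; ring
  have hy : ‖(√(1 - t) : 𝕜) • single (0 : Fin 2) (1 : 𝕜) - (√t : 𝕜) • single 1 1‖ = 1 := by
    simpa [sub_eq_add_neg] using
      norm_ofReal_smul_single_add_eq_one (𝕜 := 𝕜) (q := -√t) (by rwa [neg_sq])
  refine ⟨dotForm 𝕜 (Fin 2), _, _, dotForm_comm, norm_dotForm,
    norm_ofReal_smul_single_add_eq_one hpq, hy, ?_, fun B hB_symm hB hBxy =>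
      one_le_norm_sub_dotForm (Real.sqrt_pos.2 (by linarith)).ne' (Real.sqrt_pos.2 ht₀).ne' hpq
        hB_symm hB.le hBxy⟩
  rw [ContinuousMultilinearMap.map_ofReal_smul_add_sub_of_symm _ dotForm_comm,
    dotForm_single_single, dotForm_single_single, hp, hq, mul_one, mul_one, ← RCLike.ofReal_sub,
    RCLike.norm_ofReal, abs_of_pos (by linarith)]
  linarith
end

section
/- Let X₁,…,X_N be Banach spaces over 𝕂 = ℝ or ℂ. If the pair (X₁×⋯×X_N, 𝕂) has the property L_{o,o} for N-linear forms, then the norm of the Banach space ℒ(X₁×⋯×X_N) of continuous N-linear forms is strongly subdifferentiable. -/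
/-- The norm of the Banach space `E` is strongly subdifferentiable at `x`: the one-sided limit
`lim_{t→0⁺} (‖x+th‖−1)/t` exists uniformly in `h` in the closed unit ball of `E`. -/
def SSDAt (𝕜 : Type*) {E : Type*} [RCLike 𝕜] [NormedAddCommGroup E] [NormedSpace 𝕜 E]
    (x : E) : Prop :=
  ∃ τ : E → ℝ, ∀ ε > (0 : ℝ), ∃ δ > (0 : ℝ), ∀ t : ℝ, 0 < t → t < δ →
    ∀ h : E, ‖h‖ ≤ 1 → |(‖x + (t : 𝕜) • h‖ - 1) / t - τ h| < ε

/-- The norm of `E` is strongly subdifferentiable (at every point of the unit sphere). -/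
def SSD (𝕜 E : Type*) [RCLike 𝕜] [NormedAddCommGroup E] [NormedSpace 𝕜 E] : Prop :=
  ∀ x : E, ‖x‖ = 1 → SSDAt 𝕜 x

/-!
Fix `A` with `‖A‖ = 1` and let `τ B` be the infimum over `s > 0` of `(‖A + s B‖ - 1) / s`.
Every norming functional `φ` of `A` satisfies `re (φ B) ≤ τ B`, so it suffices to find, for all
small `t > 0` and all `B` in the unit ball, a norming functional with
`‖A + t B‖ ≤ 1 + t re (φ B) + t ε`. Take a unit `x` almost norming `A + t B`; then `|A x|` is close
to `1`, and `L_{o,o}` yields a unit `y` near `x` with `|A y| = 1`, whose evaluation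
`B ↦ ⟪A y, B y⟫` norms `A`. Since `|a + t b| ≤ 1 + t re ⟪a, b⟫ + t² / 2` whenever `|a|, |b| ≤ 1`,
applying this to `a = A x`, `b = B x` costs only `t` times `‖x - y‖` plus `O(t²)`.
-/

open RCLike

open scoped InnerProductSpace

section NormedSpace

variable {𝕜 E : Type*} [RCLike 𝕜] [NormedAddCommGroup E] [NormedSpace 𝕜 E]

theorem re_apply_le_div_of_opNorm_le_one {φ : StrongDual 𝕜 E} (hφ : ‖φ‖ ≤ 1) {x : E}
    (hφx : φ x = 1) (v : E) {s : ℝ} (hs : 0 < s) :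
    re (φ v) ≤ (‖x + (s : 𝕜) • v‖ - 1) / s := by
  have h : re (φ (x + (s : 𝕜) • v)) ≤ ‖x + (s : 𝕜) • v‖ :=
    (re_le_norm _).trans ((φ.le_of_opNorm_le hφ _).trans_eq (one_mul _))
  rw [map_add, map_smul, hφx, smul_eq_mul, map_add, re_ofReal_mul, one_re] at h
  rw [le_div_iff₀ hs]
  linarith

theorem ssdAt_of_forall_exists_dual {x : E}
    (h : ∀ ε > (0 : ℝ), ∃ δ > (0 : ℝ), ∀ t : ℝ, 0 < t → t < δ → ∀ v : E, ‖v‖ ≤ 1 →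
      ∃ φ : StrongDual 𝕜 E, ‖φ‖ ≤ 1 ∧ φ x = 1 ∧ ‖x + (t : 𝕜) • v‖ ≤ 1 + t * re (φ v) + t * ε) :
    SSDAt 𝕜 x := by
  set q : E → ℝ → ℝ := fun v s => (‖x + (s : 𝕜) • v‖ - 1) / s
  refine ⟨fun v => sInf (q v '' Set.Ioi 0), fun ε hε => ?_⟩
  obtain ⟨δ, hδ, hφ⟩ := h (ε / 2) (half_pos hε)
  refine ⟨δ, hδ, fun t ht htδ v hv => ?_⟩
  obtain ⟨φ, hφ1, hφx, hle⟩ := hφ t ht htδ v hv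
  have hlower : ∀ y ∈ q v '' Set.Ioi 0, re (φ v) ≤ y := by
    rintro _ ⟨s, hs, rfl⟩
    exact re_apply_le_div_of_opNorm_le_one hφ1 hφx v hs
  have hinf_le : sInf (q v '' Set.Ioi 0) ≤ q v t := csInf_le ⟨_, hlower⟩ ⟨t, ht, rfl⟩
  have hle_inf : re (φ v) ≤ sInf (q v '' Set.Ioi 0) := le_csInf ⟨_, t, ht, rfl⟩ hlower
  have hqt : q v t ≤ re (φ v) + ε / 2 := by
    rw [div_le_iff₀ ht]
    linarith
  rw [abs_of_nonneg (sub_nonneg.2 hinf_le)]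
  linarith

end NormedSpace

section InnerProductSpace

variable {𝕜 F : Type*} [RCLike 𝕜] [NormedAddCommGroup F] [InnerProductSpace 𝕜 F]

theorem norm_add_smul_le_of_norm_le_one {a b : F} (ha : ‖a‖ ≤ 1) (hb : ‖b‖ ≤ 1) (t : ℝ) :
    ‖a + (t : 𝕜) • b‖ ≤ 1 + t * re ⟪a, b⟫_𝕜 + t ^ 2 / 2 := by
  have hsq : ‖a + (t : 𝕜) • b‖ ^ 2 = ‖a‖ ^ 2 + 2 * t * re ⟪a, b⟫_𝕜 + t ^ 2 * ‖b‖ ^ 2 := by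
    rw [norm_add_sq (𝕜 := 𝕜), inner_smul_right, re_ofReal_mul, norm_smul, norm_ofReal,
      mul_pow, sq_abs]
    ring
  have hre : |re ⟪a, b⟫_𝕜| ≤ 1 :=
    (abs_re_le_norm _).trans
      ((norm_inner_le_norm (𝕜 := 𝕜) a b).trans (mul_le_one₀ ha (norm_nonneg b) hb))
  obtain ⟨hre_ge, hre_le⟩ := abs_le.1 hre
  have hpos : 0 ≤ 1 + t * re ⟪a, b⟫_𝕜 + t ^ 2 / 2 := by
    nlinarith [sq_nonneg (t + re ⟪a, b⟫_𝕜)]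
  have hsq_le : ‖a + (t : 𝕜) • b‖ ^ 2 ≤ (1 + t * re ⟪a, b⟫_𝕜 + t ^ 2 / 2) ^ 2 := by
    rw [hsq]
    nlinarith [sq_nonneg (t * (re ⟪a, b⟫_𝕜 + t / 2)), pow_le_one₀ (norm_nonneg a) ha (n := 2),
      pow_le_one₀ (norm_nonneg b) hb (n := 2), sq_nonneg t]
  exact le_of_sq_le_sq hsq_le hpos

theorem re_inner_le_re_inner_add {a a' b b' : F} (ha' : ‖a'‖ ≤ 1) (hb : ‖b‖ ≤ 1) :
    re ⟪a, b⟫_𝕜 ≤ re ⟪a', b'⟫_𝕜 + ‖a - a'‖ + ‖b - b'‖ := by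
  have hsplit : ⟪a, b⟫_𝕜 = ⟪a', b'⟫_𝕜 + ⟪a - a', b⟫_𝕜 + ⟪a', b - b'⟫_𝕜 := by
    rw [inner_sub_left, inner_sub_right]
    ring
  have h₁ : re ⟪a - a', b⟫_𝕜 ≤ ‖a - a'‖ :=
    (re_le_norm _).trans
      ((norm_inner_le_norm (𝕜 := 𝕜) _ _).trans (mul_le_of_le_one_right (norm_nonneg _) hb))
  have h₂ : re ⟪a', b - b'⟫_𝕜 ≤ ‖b - b'‖ :=
    (re_le_norm _).trans
      ((norm_inner_le_norm (𝕜 := 𝕜) _ _).trans (mul_le_of_le_one_left (norm_nonneg _) ha'))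
  rw [hsplit, map_add, map_add]
  linarith

end InnerProductSpace

namespace ContinuousMultilinearMap

variable {𝕜 ι G : Type*} [RCLike 𝕜] [Fintype ι] {X : ι → Type*}
  [∀ i, NormedAddCommGroup (X i)] [∀ i, NormedSpace 𝕜 (X i)] [NormedAddCommGroup G]
  [NormedSpace 𝕜 G]

theorem exists_norm_apply_gt (f : ContinuousMultilinearMap 𝕜 X G) {r : ℝ} (hr₀ : 0 ≤ r)
    (hr : r < ‖f‖) : ∃ x : ∀ i, X i, (∀ i, ‖x i‖ = 1) ∧ r < ‖f x‖ := by
  by_contra! hle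
  refine hr.not_ge (opNorm_le_bound hr₀ fun m => ?_)
  by_cases hm : ∃ i, m i = 0
  · obtain ⟨i, hi⟩ := hm
    rw [f.map_coord_zero i hi, norm_zero]
    exact mul_nonneg hr₀ (Finset.prod_nonneg fun i _ => norm_nonneg _)
  push Not at hm
  set x : ∀ i, X i := fun i => (‖m i‖⁻¹ : 𝕜) • m i
  have hmx : m = fun i => (‖m i‖ : 𝕜) • x i := by
    funext i
    rw [smul_inv_smul₀ (ofReal_ne_zero.2 (norm_ne_zero_iff.2 (hm i)))]
  have hfm : ‖f m‖ = (∏ i, ‖m i‖) * ‖f x‖ := by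
    conv_lhs => rw [hmx, f.map_smul_univ, norm_smul, norm_prod]
    simp only [norm_ofReal, abs_norm]
  rw [hfm, mul_comm r]
  exact mul_le_mul_of_nonneg_left (hle x fun i => norm_smul_inv_norm (hm i))
    (Finset.prod_nonneg fun i _ => norm_nonneg _)

theorem exists_almost_norming_of_norm_sub_le {A C : ContinuousMultilinearMap 𝕜 X G}
    (hA : ‖A‖ = 1) {t : ℝ} (hCA : ‖C - A‖ ≤ t) (ht₀ : 0 < t) (ht : t ≤ 1 / 2) :
    ∃ x : ∀ i, X i, (∀ i, ‖x i‖ = 1) ∧ ‖C‖ ≤ ‖C x‖ + t ^ 2 ∧ 1 - 3 * t ≤ ‖A x‖ := by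
  have hC : 1 - t ≤ ‖C‖ := by linarith [norm_sub_norm_le A C, norm_sub_rev C A]
  obtain ⟨x, hx, hCx⟩ := C.exists_norm_apply_gt (r := ‖C‖ - t ^ 2) (by nlinarith) (by nlinarith)
  have hCAx := ((C - A).unit_le_opNorm
    ((pi_norm_le_iff_of_nonneg zero_le_one).2 fun i => (hx i).le)).trans hCA
  rw [sub_apply] at hCAx
  exact ⟨x, hx, by linarith, by nlinarith [norm_sub_norm_le (C x) (A x)]⟩

theorem norm_apply_sub_apply_le (f : ContinuousMultilinearMap 𝕜 X G) {x y : ∀ i, X i}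
    (hx : ‖x‖ ≤ 1) (hy : ‖y‖ ≤ 1) : ‖f x - f y‖ ≤ ‖f‖ * Fintype.card ι * ‖x - y‖ := by
  refine (f.norm_image_sub_le x y).trans (mul_le_mul_of_nonneg_right ?_ (norm_nonneg _))
  exact mul_le_of_le_one_right (by positivity) (pow_le_one₀ (by positivity) (max_le hx hy))

theorem exists_dual_eq_inner_apply (A : ContinuousMultilinearMap 𝕜 X 𝕜) {y : ∀ i, X i}
    (hy : ‖y‖ ≤ 1) (hAy : ‖A y‖ = 1) :
    ∃ φ : StrongDual 𝕜 (ContinuousMultilinearMap 𝕜 X 𝕜),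
      ‖φ‖ ≤ 1 ∧ φ A = 1 ∧ ∀ B, φ B = ⟪A y, B y⟫_𝕜 := by
  refine ⟨(innerSL 𝕜 (A y)).comp (apply 𝕜 X 𝕜 y), ?_, ?_, fun B => rfl⟩
  · refine ContinuousLinearMap.opNorm_le_bound _ zero_le_one fun B => ?_
    calc ‖⟪A y, B y⟫_𝕜‖ ≤ ‖A y‖ * ‖B y‖ := norm_inner_le_norm _ _
      _ ≤ 1 * ‖B‖ := by rw [hAy]; exact mul_le_mul_of_nonneg_left (B.unit_le_opNorm hy) zero_le_one
  · change ⟪A y, A y⟫_𝕜 = 1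
    rw [inner_self_eq_norm_sq_to_K, hAy, ofReal_one, one_pow]

theorem norm_add_smul_le_re_inner_apply (A B : ContinuousMultilinearMap 𝕜 X 𝕜) (hA : ‖A‖ ≤ 1)
    (hB : ‖B‖ ≤ 1) {t : ℝ} (ht : 0 ≤ t) {x y : ∀ i, X i} (hx : ‖x‖ ≤ 1) (hy : ‖y‖ ≤ 1)
    (hCx : ‖A + (t : 𝕜) • B‖ ≤ ‖(A + (t : 𝕜) • B) x‖ + t ^ 2) :
    ‖A + (t : 𝕜) • B‖ ≤
      1 + t * re ⟪A y, B y⟫_𝕜 + t * (2 * Fintype.card ι * ‖x - y‖ + 3 / 2 * t) := by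
  have hAx := (A.unit_le_opNorm hx).trans hA
  have hBx := (B.unit_le_opNorm hx).trans hB
  have hCx' := norm_add_smul_le_of_norm_le_one (𝕜 := 𝕜) hAx hBx t
  have hre := re_inner_le_re_inner_add (𝕜 := 𝕜) (a := A x) (b' := B y)
    ((A.unit_le_opNorm hy).trans hA) hBx
  have hxy : 0 ≤ Fintype.card ι * ‖x - y‖ := by positivity
  have hAxy := A.norm_apply_sub_apply_le hx hy
  have hBxy := B.norm_apply_sub_apply_le hx hy
  rw [mul_assoc] at hAxy hBxy
  have hAxy' := hAxy.trans (mul_le_of_le_one_left hxy hA)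
  have hBxy' := hBxy.trans (mul_le_of_le_one_left hxy hB)
  rw [add_apply, smul_apply] at hCx
  have := mul_le_mul_of_nonneg_left hre ht
  nlinarith

end ContinuousMultilinearMap

theorem stmt_11_general {𝕜 : Type*} [RCLike 𝕜] {N : ℕ} (X : Fin N → Type*)
    [∀ i, NormedAddCommGroup (X i)] [∀ i, NormedSpace 𝕜 (X i)]
    (hLoo : ∀ ε > (0 : ℝ), ∀ A : ContinuousMultilinearMap 𝕜 X 𝕜, ‖A‖ = 1 →
      ∃ η > (0 : ℝ), ∀ x : (∀ i, X i), (∀ i, ‖x i‖ = 1) → ‖A x‖ > 1 - η →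
        ∃ x₀ : (∀ i, X i), (∀ i, ‖x₀ i‖ = 1) ∧ ‖A x₀‖ = 1 ∧ ∀ i, ‖x₀ i - x i‖ < ε) :
    SSD 𝕜 (ContinuousMultilinearMap 𝕜 X 𝕜) := by
  intro A hA
  refine ssdAt_of_forall_exists_dual fun ε hε => ?_
  set e := ε / (4 * (N + 1))
  obtain ⟨η, hη, hLooA⟩ := hLoo e (by positivity) A hA
  refine ⟨min (min (η / 3) (ε / 3)) (1 / 2), by positivity, fun t ht htδ B hB => ?_⟩
  obtain ⟨⟨htη, htε⟩, ht2⟩ := lt_min_iff.1 htδ |>.imp_left lt_min_iff.1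
  have hCA : ‖A + (t : 𝕜) • B - A‖ ≤ t := by
    rw [add_sub_cancel_left, norm_smul, norm_ofReal, abs_of_pos ht]
    exact mul_le_of_le_one_right ht.le hB
  obtain ⟨x, hx, hCx, hAx⟩ := ContinuousMultilinearMap.exists_almost_norming_of_norm_sub_le hA hCA ht ht2.le
  obtain ⟨y, hy, hAy, hxy⟩ := hLooA x hx (by linarith)
  have hx' : ‖x‖ ≤ 1 := (pi_norm_le_iff_of_nonneg zero_le_one).2 fun i => (hx i).le
  have hy' : ‖y‖ ≤ 1 := (pi_norm_le_iff_of_nonneg zero_le_one).2 fun i => (hy i).le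
  have hxy' : ‖x - y‖ ≤ e := (pi_norm_le_iff_of_nonneg (by positivity)).2 fun i => by
    rw [Pi.sub_apply, norm_sub_rev]
    exact (hxy i).le
  obtain ⟨φ, hφ, hφA, hφB⟩ := A.exists_dual_eq_inner_apply hy' hAy
  refine ⟨φ, hφ, hφA, ?_⟩
  have hNe : 2 * N * e ≤ ε / 2 := by
    have he : e * (4 * (N + 1)) = ε := div_mul_cancel₀ _ (by positivity)
    nlinarith [(by positivity : 0 ≤ e)]
  calc ‖A + (t : 𝕜) • B‖ ≤ 1 + t * re (φ B) + t * (2 * N * ‖x - y‖ + 3 / 2 * t) := by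
        simpa [hφB] using A.norm_add_smul_le_re_inner_apply B hA.le hB ht.le hx' hy' hCx
    _ ≤ 1 + t * re (φ B) + t * ε := by gcongr; nlinarith

/-- If the pair `(X₁×⋯×X_N, 𝕜)` has the property `L_{o,o}` for `N`-linear
forms, then the norm of the Banach space `ℒ(X₁×⋯×X_N)` of continuous `N`-linear forms is
strongly subdifferentiable. -/
theorem stmt_11 {𝕜 : Type*} [RCLike 𝕜] {N : ℕ} (X : Fin N → Type*)
    [∀ i, NormedAddCommGroup (X i)] [∀ i, NormedSpace 𝕜 (X i)] [∀ i, CompleteSpace (X i)]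
    (hLoo : ∀ ε > (0 : ℝ), ∀ A : ContinuousMultilinearMap 𝕜 X 𝕜, ‖A‖ = 1 →
      ∃ η > (0 : ℝ), ∀ x : (∀ i, X i), (∀ i, ‖x i‖ = 1) → ‖A x‖ > 1 - η →
        ∃ x₀ : (∀ i, X i), (∀ i, ‖x₀ i‖ = 1) ∧ ‖A x₀‖ = 1 ∧ ∀ i, ‖x₀ i - x i‖ < ε) :
    SSD 𝕜 (ContinuousMultilinearMap 𝕜 X 𝕜) :=
  stmt_11_general X hLoo
end

section
/- Let X₁,…,X_N be Banach spaces over 𝕂 = ℝ or ℂ with X_N uniformly convex. If the pair (X₁×⋯×X_{N−1}, X_N*) has the property L_{o,o} for continuous (N−1)-linear maps with values in the dual X_N*, then the pair (X₁×⋯×X_N, 𝕂) has the property L_{o,o} for N-linear forms, where an N-linear form A corresponds to the (N−1)-linear map Ã(x₁,…,x_{N−1})(x_N) = A(x₁,…,x_N). -/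
/-!
If `|A x y|` is close to `1`, so is `‖A x‖`, and the hypothesis on `Ã` gives `x₀` near `x` with
`‖A x₀‖ = 1`; the functional `A x₀` is close to `A x`, hence almost normed at `y`. In a uniformly
convex space two points of the unit ball at which a norm-one functional is almost normed are
uniformly close (their sum has norm almost `2`). Consequently a maximizing sequence is Cauchy, so
by completeness `A x₀` attains its norm at some `z`, and `y`, rotated by a unimodular scalar, lies
near `z`; `y₀` is `z` rotated back.
-/

open Filter Topology RCLike

section Functionals

variable {𝕜 : Type*} [RCLike 𝕜] {Y : Type*} [NormedAddCommGroup Y] [NormedSpace 𝕜 Y]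

theorem ContinuousLinearMap.exists_lt_re_apply_of_lt_opNorm_s12 (f : Y →L[𝕜] 𝕜) {t : ℝ}
    (ht : t < ‖f‖) : ∃ u : Y, ‖u‖ < 1 ∧ t < re (f u) := by
  obtain ⟨x, hx, hfx⟩ := f.exists_lt_apply_of_lt_opNorm ht
  obtain ⟨c, hc, hcx⟩ := exists_norm_eq_mul_self (f x)
  refine ⟨c • x, by rwa [norm_smul, hc, one_mul], ?_⟩
  rwa [map_smul, smul_eq_mul, ← hcx, ofReal_re]

variable [UniformConvexSpace Y]

variable (𝕜 Y) in
theorem exists_forall_re_apply_gt_norm_sub_lt {ε : ℝ} (hε : 0 < ε) :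
    ∃ δ > 0, ∀ f : Y →L[𝕜] 𝕜, ‖f‖ ≤ 1 → ∀ ⦃u v : Y⦄, ‖u‖ ≤ 1 → ‖v‖ ≤ 1 →
      1 - δ < re (f u) → 1 - δ < re (f v) → ‖u - v‖ < ε := by
  let _ := NormedSpace.restrictScalars ℝ 𝕜 Y
  obtain ⟨δ, hδ, hsum⟩ := exists_forall_closed_ball_dist_add_le_two_sub Y hε
  refine ⟨δ / 2, half_pos hδ, fun f hf u v hu hv hfu hfv => ?_⟩
  by_contra! hfar
  have hre : re (f (u + v)) ≤ ‖u + v‖ :=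
    (re_le_norm _).trans ((f.le_opNorm _).trans (mul_le_of_le_one_left (norm_nonneg _) hf))
  rw [map_add, map_add] at hre
  linarith [hsum hu hv hfar]

variable [CompleteSpace Y]

theorem exists_norm_eq_one_re_apply_eq_one {f : Y →L[𝕜] 𝕜} (hf : ‖f‖ = 1) :
    ∃ z : Y, ‖z‖ = 1 ∧ re (f z) = 1 := by
  have hseq (k : ℕ) : ∃ z : Y, ‖z‖ ≤ 1 ∧ 1 - 1 / ((k : ℝ) + 1) < re (f z) := by
    obtain ⟨z, hz, hfz⟩ := f.exists_lt_re_apply_of_lt_opNorm_s12 (t := 1 - 1 / ((k : ℝ) + 1))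
      (by rw [hf]; exact sub_lt_self 1 (by positivity))
    exact ⟨z, hz.le, hfz⟩
  choose z hz hfz using hseq
  have hre_le (k : ℕ) : re (f (z k)) ≤ 1 :=
    (re_le_norm _).trans ((f.unit_le_opNorm _ (hz k)).trans hf.le)
  have hlim : Tendsto (fun k => re (f (z k))) atTop (𝓝 1) := by
    have hlow : Tendsto (fun k : ℕ => 1 - 1 / ((k : ℝ) + 1)) atTop (𝓝 1) := by
      simpa using tendsto_one_div_add_atTop_nhds_zero_nat.const_sub (1 : ℝ)
    exact tendsto_of_tendsto_of_tendsto_of_le_of_le hlow tendsto_const_nhds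
      (fun k => (hfz k).le) hre_le
  have hcauchy : CauchySeq z := by
    rw [Metric.cauchySeq_iff']
    intro ε hε
    obtain ⟨δ, hδ, hnear⟩ := exists_forall_re_apply_gt_norm_sub_lt 𝕜 Y hε
    obtain ⟨N, hN⟩ := eventually_atTop.1 (hlim.eventually (lt_mem_nhds (sub_lt_self 1 hδ)))
    exact ⟨N, fun k hk => by
      rw [dist_eq_norm]; exact hnear f hf.le (hz k) (hz N) (hN k hk) (hN N le_rfl)⟩
  obtain ⟨z₀, hz₀⟩ := cauchySeq_tendsto_of_complete hcauchy
  have hre : re (f z₀) = 1 :=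
    tendsto_nhds_unique (((continuous_re.comp f.continuous).tendsto z₀).comp hz₀) hlim
  have hnorm : ‖z₀‖ ≤ 1 := le_of_tendsto' ((continuous_norm.tendsto z₀).comp hz₀) hz
  refine ⟨z₀, hnorm.antisymm ?_, hre⟩
  calc 1 = re (f z₀) := hre.symm
    _ ≤ ‖f z₀‖ := re_le_norm _
    _ ≤ ‖f‖ * ‖z₀‖ := f.le_opNorm z₀
    _ = ‖z₀‖ := by rw [hf, one_mul]

variable (𝕜 Y) in
theorem exists_forall_norm_apply_gt_exists_norm_apply_eq_one {ε : ℝ} (hε : 0 < ε) :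
    ∃ δ > 0, ∀ f : Y →L[𝕜] 𝕜, ‖f‖ = 1 → ∀ y : Y, ‖y‖ = 1 → 1 - δ < ‖f y‖ →
      ∃ y₀ : Y, ‖y₀‖ = 1 ∧ ‖f y₀‖ = 1 ∧ ‖y₀ - y‖ < ε := by
  obtain ⟨δ, hδ, hnear⟩ := exists_forall_re_apply_gt_norm_sub_lt 𝕜 Y hε
  refine ⟨δ, hδ, fun f hf y hy hfy => ?_⟩
  obtain ⟨z, hz, hfz⟩ := exists_norm_eq_one_re_apply_eq_one hf
  -- rotate `y` so that `f` takes the real value `‖f y‖` on it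
  obtain ⟨c, hc, hcy⟩ := exists_norm_eq_mul_self (f y)
  have hc0 : c ≠ 0 := norm_ne_zero_iff.1 (hc.trans_ne one_ne_zero)
  have hclose : ‖c • y - z‖ < ε :=
    hnear f hf.le (by rw [norm_smul, hc, hy, one_mul]) hz.le
      (by rwa [map_smul, smul_eq_mul, ← hcy, ofReal_re]) (by rw [hfz]; exact sub_lt_self 1 hδ)
  have hfz_norm : ‖f z‖ = 1 :=
    ((f.unit_le_opNorm z hz.le).trans hf.le).antisymm (hfz ▸ re_le_norm (f z))
  refine ⟨c⁻¹ • z, ?_, ?_, ?_⟩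
  · rw [norm_smul, norm_inv, hc, inv_one, one_mul, hz]
  · rw [map_smul, norm_smul, norm_inv, hc, inv_one, one_mul, hfz_norm]
  · rw [← inv_smul_smul₀ hc0 y, ← smul_sub, norm_smul, norm_inv, hc, inv_one, one_mul,
      norm_sub_rev]
    exact hclose

end Functionals

theorem ContinuousMultilinearMap.norm_image_sub_le_of_norm_le_one {𝕜 ι : Type*}
    [NontriviallyNormedField 𝕜] [Fintype ι] {E : ι → Type*} [∀ i, SeminormedAddCommGroup (E i)]
    [∀ i, NormedSpace 𝕜 (E i)] {G : Type*} [SeminormedAddCommGroup G] [NormedSpace 𝕜 G]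
    (f : ContinuousMultilinearMap 𝕜 E G) {m₁ m₂ : ∀ i, E i} (h₁ : ‖m₁‖ ≤ 1) (h₂ : ‖m₂‖ ≤ 1) :
    ‖f m₁ - f m₂‖ ≤ ‖f‖ * Fintype.card ι * ‖m₁ - m₂‖ := by
  have hpow : max ‖m₁‖ ‖m₂‖ ^ (Fintype.card ι - 1) ≤ 1 :=
    pow_le_one₀ (le_max_of_le_left (norm_nonneg _)) (max_le h₁ h₂)
  calc ‖f m₁ - f m₂‖
      ≤ ‖f‖ * Fintype.card ι * max ‖m₁‖ ‖m₂‖ ^ (Fintype.card ι - 1) * ‖m₁ - m₂‖ :=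
        f.norm_image_sub_le m₁ m₂
    _ ≤ ‖f‖ * Fintype.card ι * 1 * ‖m₁ - m₂‖ := by gcongr
    _ = ‖f‖ * Fintype.card ι * ‖m₁ - m₂‖ := by rw [mul_one]

theorem stmt_12_general {𝕜 : Type*} [RCLike 𝕜] {n : ℕ} (X : Fin n → Type*)
    [∀ i, NormedAddCommGroup (X i)] [∀ i, NormedSpace 𝕜 (X i)]
    (Y : Type*) [NormedAddCommGroup Y] [NormedSpace 𝕜 Y] [CompleteSpace Y]
    [UniformConvexSpace Y]
    (hLoo : ∀ ε > (0 : ℝ), ∀ A : ContinuousMultilinearMap 𝕜 X (Y →L[𝕜] 𝕜), ‖A‖ = 1 →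
      ∃ η > (0 : ℝ), ∀ x : (∀ i, X i), (∀ i, ‖x i‖ = 1) → ‖A x‖ > 1 - η →
        ∃ x₀ : (∀ i, X i), (∀ i, ‖x₀ i‖ = 1) ∧ ‖A x₀‖ = 1 ∧ ∀ i, ‖x₀ i - x i‖ < ε) :
    ∀ ε > (0 : ℝ), ∀ A : ContinuousMultilinearMap 𝕜 X (Y →L[𝕜] 𝕜), ‖A‖ = 1 →
      ∃ η > (0 : ℝ), ∀ (x : ∀ i, X i) (y : Y), (∀ i, ‖x i‖ = 1) → ‖y‖ = 1 →
        ‖A x y‖ > 1 - η →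
        ∃ (x₀ : ∀ i, X i) (y₀ : Y), (∀ i, ‖x₀ i‖ = 1) ∧ ‖y₀‖ = 1 ∧ ‖A x₀ y₀‖ = 1 ∧
          (∀ i, ‖x₀ i - x i‖ < ε) ∧ ‖y₀ - y‖ < ε := by
  intro ε hε A hA
  obtain ⟨δ, hδ, hY⟩ := exists_forall_norm_apply_gt_exists_norm_apply_eq_one 𝕜 Y hε
  -- `x ↦ A x` is `n`-Lipschitz on the unit ball, so moving `x` by `ε'` moves `A x` by `≤ δ / 2`
  set ε' := min ε (δ / (2 * (n + 1)))
  have hε' : 0 < ε' := lt_min hε (by positivity)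
  have hnε' : n * ε' ≤ δ / 2 := calc
    n * ε' ≤ n * (δ / (2 * (n + 1))) := by gcongr; exact min_le_right _ _
    _ ≤ δ / 2 := by rw [← mul_div_assoc, div_le_div_iff₀ (by positivity) two_pos]; nlinarith
  obtain ⟨η, hη, hX⟩ := hLoo ε' hε' A hA
  refine ⟨min η (δ / 2), lt_min hη (half_pos hδ), fun x y hx hy hAxy => ?_⟩
  have hAx : ‖A x‖ > 1 - η := calc
    ‖A x‖ ≥ ‖A x y‖ := (A x).unit_le_opNorm y hy.le
    _ > 1 - min η (δ / 2) := hAxy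
    _ ≥ 1 - η := by gcongr; exact min_le_left _ _
  obtain ⟨x₀, hx₀, hAx₀, hx₀x⟩ := hX x hx hAx
  have hball {x : ∀ i, X i} (hx : ∀ i, ‖x i‖ = 1) : ‖x‖ ≤ 1 :=
    (pi_norm_le_iff_of_nonneg zero_le_one).2 fun i => (hx i).le
  have hmove : ‖A x₀ - A x‖ ≤ δ / 2 := calc
    ‖A x₀ - A x‖ ≤ ‖A‖ * Fintype.card (Fin n) * ‖x₀ - x‖ :=
      A.norm_image_sub_le_of_norm_le_one (hball hx₀) (hball hx)
    _ ≤ n * ε' := by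
      rw [hA, Fintype.card_fin, one_mul]
      gcongr
      exact (pi_norm_le_iff_of_nonneg hε'.le).2 fun i => (hx₀x i).le
    _ ≤ δ / 2 := hnε'
  have hAx₀y : 1 - δ < ‖A x₀ y‖ := calc
    1 - δ < ‖A x y‖ - δ / 2 := by linarith [min_le_right η (δ / 2)]
    _ ≤ ‖A x y‖ - ‖(A x₀ - A x) y‖ := by
      gcongr; exact ((A x₀ - A x).unit_le_opNorm y hy.le).trans hmove
    _ ≤ ‖A x₀ y‖ := by
      rw [sub_apply, norm_sub_rev, sub_le_comm]
      exact norm_sub_norm_le _ _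
  obtain ⟨y₀, hy₀, hAy₀, hy₀y⟩ := hY (A x₀) hAx₀ y hy hAx₀y
  exact ⟨x₀, y₀, hx₀, hy₀, hAy₀, fun i => (hx₀x i).trans_le (min_le_left _ _), hy₀y⟩

/-- Let `X₁, …, X_{N−1}` (here a family over `Fin n` with `n = N−1`) and
`X_N = Y` be Banach spaces with `Y` uniformly convex. If the pair `(X₁×⋯×X_{N−1}, Y*)` has
the property `L_{o,o}` for `(N−1)`-linear maps with values in the dual `Y*`, then the pair
`(X₁×⋯×X_{N−1}×Y, 𝕜)` has the property `L_{o,o}` for `N`-linear forms, an `N`-linear form `A`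
being identified with the `(N−1)`-linear `Y*`-valued map `Ã(x₁,…,x_{N−1})(x_N) = A(x₁,…,x_N)`
(an isometric identification). -/
theorem stmt_12 {𝕜 : Type*} [RCLike 𝕜] {n : ℕ} (X : Fin n → Type*)
    [∀ i, NormedAddCommGroup (X i)] [∀ i, NormedSpace 𝕜 (X i)] [∀ i, CompleteSpace (X i)]
    (Y : Type*) [NormedAddCommGroup Y] [NormedSpace 𝕜 Y] [CompleteSpace Y]
    [UniformConvexSpace Y]
    (hLoo : ∀ ε > (0 : ℝ), ∀ A : ContinuousMultilinearMap 𝕜 X (Y →L[𝕜] 𝕜), ‖A‖ = 1 →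
      ∃ η > (0 : ℝ), ∀ x : (∀ i, X i), (∀ i, ‖x i‖ = 1) → ‖A x‖ > 1 - η →
        ∃ x₀ : (∀ i, X i), (∀ i, ‖x₀ i‖ = 1) ∧ ‖A x₀‖ = 1 ∧ ∀ i, ‖x₀ i - x i‖ < ε) :
    ∀ ε > (0 : ℝ), ∀ A : ContinuousMultilinearMap 𝕜 X (Y →L[𝕜] 𝕜), ‖A‖ = 1 →
      ∃ η > (0 : ℝ), ∀ (x : ∀ i, X i) (y : Y), (∀ i, ‖x i‖ = 1) → ‖y‖ = 1 →
        ‖A x y‖ > 1 - η →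
        ∃ (x₀ : ∀ i, X i) (y₀ : Y), (∀ i, ‖x₀ i‖ = 1) ∧ ‖y₀‖ = 1 ∧ ‖A x₀ y₀‖ = 1 ∧
          (∀ i, ‖x₀ i - x i‖ < ε) ∧ ‖y₀ - y‖ < ε :=
  stmt_12_general X Y hLoo
end

section
/- Let Y be a Banach space and N ∈ ℕ. The ℓ¹-direct sum of N copies of Y, i.e. the space Y^N equipped with the norm ‖(y₁,…,y_N)‖ = ‖y₁‖ + ⋯ + ‖y_N‖, is strongly subdifferentiable if and only if Y is strongly subdifferentiable. (This is the content of the statement that ℓ₁^N ⊗̂_π Y is SSD if and only if Y is SSD, via the isometric identification ℓ₁^N ⊗̂_π Y = ℓ₁^N(Y).) -/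
section helpers

variable {𝕜 Y : Type*} [RCLike 𝕜] [NormedAddCommGroup Y] [NormedSpace 𝕜 Y] {N : ℕ}

lemma l1_norm_eq (x : PiLp 1 (fun _ : Fin N => Y)) : ‖x‖ = ∑ i, ‖x i‖ := by
  rw [PiLp.norm_eq_sum (by norm_num)]
  simp

lemma ssdat_component (x : Y) :
    ∃ T : Y → ℝ, (SSD 𝕜 Y) → ∀ ε > (0:ℝ), ∃ δ > (0:ℝ), ∀ t : ℝ, 0 < t → t < δ →
      ∀ v : Y, ‖v‖ ≤ 1 → |(‖x + (t : 𝕜) • v‖ - ‖x‖) / t - T v| < ε := by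
  by_cases h0 : x = 0
  · refine ⟨fun v => ‖v‖, fun _ ε hε => ⟨1, one_pos, fun t ht _ v _ => ?_⟩⟩
    subst h0
    have : ‖(0:Y) + (t : 𝕜) • v‖ = t * ‖v‖ := by
      rw [zero_add, norm_smul, RCLike.norm_ofReal, abs_of_pos ht]
    rw [this, norm_zero, sub_zero, mul_comm, mul_div_assoc, div_self ht.ne', mul_one,
      sub_self, abs_zero]
    exact hε
  · set r : ℝ := ‖x‖ with hr
    have hrpos : 0 < r := norm_pos_iff.mpr h0
    set u : Y := ((r⁻¹ : ℝ) : 𝕜) • x with hu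
    have hunorm : ‖u‖ = 1 := by
      rw [hu, norm_smul, RCLike.norm_ofReal, abs_of_pos (inv_pos.mpr hrpos), ← hr,
        inv_mul_cancel₀ hrpos.ne']
    by_cases hssd : SSD 𝕜 Y
    · obtain ⟨τ, hτ⟩ := hssd u hunorm
      refine ⟨τ, fun _ ε hε => ?_⟩
      obtain ⟨δ₀, hδ₀, hP⟩ := hτ ε hε
      refine ⟨r * δ₀, mul_pos hrpos hδ₀, fun t ht htδ v hv => ?_⟩
      set s : ℝ := t / r with hs
      have hspos : 0 < s := div_pos ht hrpos
      have hsδ : s < δ₀ := (div_lt_iff₀' hrpos).mpr htδ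
      have key : x + (t : 𝕜) • v = ((r : ℝ) : 𝕜) • (u + (s : 𝕜) • v) := by
        rw [hu, smul_add, smul_smul, smul_smul, ← RCLike.ofReal_mul, ← RCLike.ofReal_mul,
          mul_inv_cancel₀ hrpos.ne', mul_div_cancel₀ t hrpos.ne']
        simp
      have hnorm : ‖x + (t : 𝕜) • v‖ = r * ‖u + (s : 𝕜) • v‖ := by
        rw [key, norm_smul, RCLike.norm_ofReal, abs_of_pos hrpos]
      have hts : t = r * s := by rw [hs, mul_div_cancel₀ t hrpos.ne']
      have : (‖x + (t : 𝕜) • v‖ - r) / t = (‖u + (s : 𝕜) • v‖ - 1) / s := by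
        rw [hnorm, hts, ← mul_sub_one, mul_div_mul_left _ _ hrpos.ne']
      rw [this]
      exact hP s hspos hsδ v hv
    · exact ⟨fun _ => 0, fun h => absurd h hssd⟩

end helpers

/-- For a Banach space `Y` and `N ≥ 1`, the `ℓ¹`-direct sum of `N` copies of
`Y` (i.e. `Y^N` with the norm `‖(y₁,…,y_N)‖ = ‖y₁‖ + ⋯ + ‖y_N‖`, realized as `PiLp 1`) is
strongly subdifferentiable if and only if `Y` is strongly subdifferentiable. -/
theorem stmt_16 {𝕜 Y : Type*} [RCLike 𝕜] [NormedAddCommGroup Y] [NormedSpace 𝕜 Y]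
    [CompleteSpace Y] {N : ℕ} (hN : 0 < N) :
    SSD 𝕜 (PiLp 1 (fun _ : Fin N => Y)) ↔ SSD 𝕜 Y := by
  constructor
  · -- forward: restrict to one coordinate
    intro hL x hx
    set i₀ : Fin N := ⟨0, hN⟩
    set e : Y → PiLp 1 (fun _ : Fin N => Y) :=
      fun y => (WithLp.equiv 1 (∀ _ : Fin N, Y)).symm (Pi.single i₀ y) with he
    have happ : ∀ (y : Y) (j : Fin N), e y j = (Pi.single i₀ y : ∀ _ : Fin N, Y) j := fun y j => rfl
    have hsingle : ∀ y : Y, ‖e y‖ = ‖y‖ := by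
      intro y
      rw [l1_norm_eq]
      rw [Finset.sum_eq_single i₀]
      · rw [happ]; simp
      · intro j _ hj; rw [happ]; simp [Pi.single_eq_of_ne hj]
      · simp
    obtain ⟨τ, hτ⟩ := hL (e x) (by rw [hsingle, hx])
    refine ⟨fun v => τ (e v), fun ε hε => ?_⟩
    obtain ⟨δ, hδ, hP⟩ := hτ ε hε
    refine ⟨δ, hδ, fun t ht htδ h hh => ?_⟩
    have heq : e x + (t : 𝕜) • e h = e (x + (t : 𝕜) • h) := by
      ext j
      rw [PiLp.add_apply, PiLp.smul_apply, happ, happ, happ]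
      by_cases hj : j = i₀
      · subst hj; simp
      · simp [Pi.single_eq_of_ne hj]
    have := hP t ht htδ (e h) (by rw [hsingle]; exact hh)
    rwa [heq, hsingle] at this
  · -- backward
    intro hY x hx
    choose T hT using fun i => ssdat_component (𝕜 := 𝕜) (x i)
    replace hT := fun i => hT i hY
    have hNne : (Finset.univ : Finset (Fin N)).Nonempty :=
      Finset.univ_nonempty_iff.mpr ⟨⟨0, hN⟩⟩
    refine ⟨fun h => ∑ i, T i (h i), fun ε hε => ?_⟩
    have hεN : 0 < ε / N := div_pos hε (Nat.cast_pos.mpr hN)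
    choose δ hδpos hδ using fun i => hT i (ε / N) hεN
    refine ⟨Finset.univ.inf' hNne δ, (Finset.lt_inf'_iff _).mpr fun i _ => hδpos i,
      fun t ht htδ h hh => ?_⟩
    have htδi : ∀ i, t < δ i := fun i =>
      htδ.trans_le (Finset.inf'_le _ (Finset.mem_univ i))
    have hhi : ∀ i, ‖h i‖ ≤ 1 := by
      intro i
      refine le_trans ?_ (le_trans (l1_norm_eq h).ge hh)
      exact Finset.single_le_sum (fun j _ => norm_nonneg _) (Finset.mem_univ i)
    have hsplit : (‖x + (t : 𝕜) • h‖ - 1) / t - ∑ i, T i (h i)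
        = ∑ i, ((‖x i + (t : 𝕜) • h i‖ - ‖x i‖) / t - T i (h i)) := by
      rw [l1_norm_eq, ← hx, l1_norm_eq x]
      rw [Finset.sum_sub_distrib, ← Finset.sum_div, ← Finset.sum_sub_distrib]
      congr 1
    calc |(‖x + (t : 𝕜) • h‖ - 1) / t - ∑ i, T i (h i)|
        = |∑ i, ((‖x i + (t : 𝕜) • h i‖ - ‖x i‖) / t - T i (h i))| := by rw [hsplit]
      _ ≤ ∑ i, |(‖x i + (t : 𝕜) • h i‖ - ‖x i‖) / t - T i (h i)| :=
          Finset.abs_sum_le_sum_abs _ _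
      _ < ∑ _i : Fin N, ε / N :=
          Finset.sum_lt_sum_of_nonempty hNne fun i _ => hδ i t ht (htδi i) (h i) (hhi i)
      _ = ε := by
          rw [Finset.sum_const, Finset.card_univ, Fintype.card_fin, nsmul_eq_mul,
            mul_div_cancel₀ ε (Nat.cast_pos.mpr hN).ne']
end

section
/- Let X and Y be Banach spaces, N ∈ ℕ and 1 < p, q < ∞ with Nq ≥ p. Suppose that X contains no subspace isomorphic to ℓ₁, that there exists a bounded surjective linear operator from X onto ℓ_p, and that there exists a linear isomorphic embedding of ℓ_q into Y (a bounded linear operator ℓ_q → Y that is bounded below). Then there exists a continuous N-homogeneous polynomial P from X to Y that is not weakly sequentially continuous. -/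
/-!
Lift the unit vectors `e n` of `ℓ_p` through the quotient map `π` to a bounded sequence `x n`
(open mapping theorem). As `X` contains no `ℓ₁`, Rosenthal's `ℓ₁` theorem makes some
subsequence `x (φ k)` weakly Cauchy, so `u k = x (φ (2k+1)) - x (φ (2k))` is weakly null. The
polynomial `P x = J (fun i => (π x) i ^ N)` is continuous because `Nq ≥ p`: by AM-GM,
`∏ⱼ ‖b j i‖^q ≤ N⁻¹ ∑ⱼ ‖b j i‖^(Nq)`, and `‖b j i‖^(Nq) ≤ ‖b j i‖^p` on the unit ball. But
`π (u k) = e (φ (2k+1)) - e (φ (2k))`, so `P (u k)` has a coordinate equal to `1`.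

Rosenthal's theorem follows his original argument. A functional `f` of norm `≤ 1` splits an
infinite `M ⊆ ℕ` if `f (x n)` lies within `ρ` of `z` for infinitely many `n ∈ M`, and within `ρ`
of `z'` for infinitely many `n ∈ M`, where `‖z - z'‖ ≥ 8ρ`. If for some `z, z', ρ` every infinite
subset of some infinite `M₀` is split, a combinatorial extraction gives a subsequence on which
every near-`z`/near-`z'` pattern is realised by one functional, and a sign argument bounds
`‖∑ a k • x (u k)‖` below by `ρ ∑ ‖a k‖`. Otherwise, diagonalising over countably many triples
gives a subsequence that nothing splits, along which every functional has one cluster value.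
-/

open Filter Topology Function
open scoped ENNReal lp

theorem Real.prod_rpow_le_inv_card_mul_sum_rpow {ι : Type*} [Fintype ι] [Nonempty ι]
    {c : ι → ℝ} (hc : ∀ j, 0 ≤ c j) (t : ℝ) :
    ∏ j, c j ^ t ≤ (Fintype.card ι : ℝ)⁻¹ * ∑ j, c j ^ (Fintype.card ι * t) := by
  have hn : (0 : ℝ) < Fintype.card ι := Nat.cast_pos.mpr Fintype.card_pos
  have amgm := Real.geom_mean_le_arith_mean_weighted Finset.univ
    (fun _ => (Fintype.card ι : ℝ)⁻¹) (fun j => c j ^ (Fintype.card ι * t))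
    (fun _ _ => by positivity) (by simp [Finset.card_univ, hn.ne'])
    (fun j _ => Real.rpow_nonneg (hc j) _)
  rw [← Finset.mul_sum] at amgm
  convert amgm using 2 with j
  rw [← Real.rpow_mul (hc j), mul_comm, inv_mul_cancel_left₀ hn.ne']

theorem norm_prod_rpow_le_inv_card_mul_sum {𝕜 ι : Type*} [NormedField 𝕜] [Fintype ι]
    [Nonempty ι] (a : ι → 𝕜) (t : ℝ) :
    ‖∏ j, a j‖ ^ t ≤ (Fintype.card ι : ℝ)⁻¹ * ∑ j, ‖a j‖ ^ (Fintype.card ι * t) := by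
  rw [norm_prod, ← Real.finsetProd_rpow _ _ fun _ _ => norm_nonneg _]
  exact Real.prod_rpow_le_inv_card_mul_sum_rpow (fun _ => norm_nonneg _) t

namespace lp

variable {𝕜 ι α : Type*} [NontriviallyNormedField 𝕜] [Fintype ι] [Nonempty ι] {p q : ℝ≥0∞}

theorem memℓp_prod {f : ι → α → 𝕜} (hf : ∀ j, Memℓp (f j) p) (hq : 0 < q.toReal)
    (hpq : p ≤ Fintype.card ι * q) : Memℓp (fun i => ∏ j, f j i) q := by
  have hNq : ((Fintype.card ι : ℝ≥0∞) * q).toReal = Fintype.card ι * q.toReal := by simp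
  have hsum : ∀ j, Summable fun i => ‖f j i‖ ^ (Fintype.card ι * q.toReal) := fun j =>
    hNq ▸ ((hf j).of_exponent_ge hpq).summable (hNq ▸ by positivity)
  exact memℓp_gen <| Summable.of_nonneg_of_le (fun _ => by positivity)
    (fun i => norm_prod_rpow_le_inv_card_mul_sum _ _)
    ((summable_sum (s := Finset.univ) fun j _ => hsum j).mul_left _)

theorem sum_norm_rpow_le_one [Fact (1 ≤ p)] (hp : p ≠ ∞) {f : ℓ^p(α, 𝕜)} (hf : ‖f‖ ≤ 1)
    {r : ℝ} (hr : p.toReal ≤ r) (s : Finset α) : ∑ i ∈ s, ‖f i‖ ^ r ≤ 1 := by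
  have hp0 : p ≠ 0 := (zero_lt_one.trans_le Fact.out).ne'
  have hp0' : 0 < p.toReal := ENNReal.toReal_pos hp0 hp
  calc ∑ i ∈ s, ‖f i‖ ^ r ≤ ∑ i ∈ s, ‖f i‖ ^ p.toReal :=
        Finset.sum_le_sum fun i _ => Real.rpow_le_rpow_of_exponent_ge' (norm_nonneg _)
          ((norm_apply_le_norm hp0 f i).trans hf) hp0'.le hr
    _ ≤ ‖f‖ ^ p.toReal := sum_rpow_le_norm_rpow hp0' f s
    _ ≤ 1 := Real.rpow_le_one (norm_nonneg _) hf hp0'.le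

variable (𝕜 ι α) in
noncomputable def prodMultilinearMap (hq : 0 < q.toReal) (hpq : p ≤ Fintype.card ι * q) :
    MultilinearMap 𝕜 (fun _ : ι => ℓ^p(α, 𝕜)) ℓ^q(α, 𝕜) where
  toFun b := ⟨fun i => ∏ j, b j i, memℓp_prod (fun j => lp.memℓp (b j)) hq hpq⟩
  map_update_add' b j x y := by
    ext i
    change ∏ k, update b j (x + y) k i = ∏ k, update b j x k i + ∏ k, update b j y k i
    simp [apply_update (fun _ (c : ℓ^p(α, 𝕜)) => c i), Finset.prod_update_of_mem, add_mul]
  map_update_smul' b j c x := by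
    ext i
    simp [apply_update (fun _ (c : ℓ^p(α, 𝕜)) => c i), Finset.prod_update_of_mem, mul_assoc,
      lp.coeFn_smul]

variable [Fact (1 ≤ p)]

theorem norm_prodMultilinearMap_le_one (hp : p ≠ ∞) (hq : 0 < q.toReal)
    (hpq : p ≤ Fintype.card ι * q) {b : ι → ℓ^p(α, 𝕜)} (hb : ∀ j, ‖b j‖ ≤ 1) :
    ‖prodMultilinearMap 𝕜 ι α hq hpq b‖ ≤ 1 := by
  set n : ℝ := (Fintype.card ι : ℝ)
  have hn : 0 < n := Nat.cast_pos.mpr Fintype.card_pos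
  have hpq' : p.toReal ≤ n * q.toReal := by
    have hq' : q ≠ ∞ := (ENNReal.toReal_pos_iff.mp hq).2.ne
    simpa [n] using ENNReal.toReal_mono (ENNReal.mul_ne_top (by simp) hq') hpq
  refine norm_le_of_forall_sum_le hq zero_le_one fun s => ?_
  calc ∑ i ∈ s, ‖∏ j, b j i‖ ^ q.toReal ≤ ∑ i ∈ s, n⁻¹ * ∑ j, ‖b j i‖ ^ (n * q.toReal) :=
        Finset.sum_le_sum fun i _ => norm_prod_rpow_le_inv_card_mul_sum _ _
    _ = n⁻¹ * ∑ j, ∑ i ∈ s, ‖b j i‖ ^ (n * q.toReal) := by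
        rw [← Finset.mul_sum, Finset.sum_comm]
    _ ≤ n⁻¹ * ∑ _j : ι, 1 := by
        gcongr with j
        exact sum_norm_rpow_le_one hp (hb j) hpq' s
    _ = 1 ^ q.toReal := by simp [n, hn.ne']

variable [Fact (1 ≤ q)]

theorem continuous_prodMultilinearMap (hp : p ≠ ∞) (hq : 0 < q.toReal)
    (hpq : p ≤ Fintype.card ι * q) : Continuous (prodMultilinearMap 𝕜 ι α hq hpq) := by
  obtain ⟨c, hc⟩ := NormedField.exists_one_lt_norm 𝕜
  have hc0 : 0 < ‖c‖ := one_pos.trans hc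
  refine (prodMultilinearMap 𝕜 ι α hq hpq).continuous_of_bound (‖c‖ ^ Fintype.card ι) fun b =>
    MultilinearMap.bound_of_shell _ (fun _ => one_pos) (fun _ => hc) (fun b hb_ge hb_lt => ?_) b
  calc _ ≤ (1 : ℝ) := norm_prodMultilinearMap_le_one hp hq hpq fun j => (hb_lt j).le
    _ = ‖c‖ ^ Fintype.card ι * ∏ _j : ι, 1 / ‖c‖ := by simp [hc0.ne']
    _ ≤ ‖c‖ ^ Fintype.card ι * ∏ j, ‖b j‖ := by gcongr with j; exact hb_ge j

variable (𝕜 ι α) in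
noncomputable def prodContinuousMultilinearMap (hp : p ≠ ∞) (hq : 0 < q.toReal)
    (hpq : p ≤ Fintype.card ι * q) :
    ContinuousMultilinearMap 𝕜 (fun _ : ι => ℓ^p(α, 𝕜)) ℓ^q(α, 𝕜) :=
  { prodMultilinearMap 𝕜 ι α hq hpq with cont := continuous_prodMultilinearMap hp hq hpq }

theorem prodContinuousMultilinearMap_apply (hp : p ≠ ∞) (hq : 0 < q.toReal)
    (hpq : p ≤ Fintype.card ι * q) (b : ι → ℓ^p(α, 𝕜)) (i : α) :
    prodContinuousMultilinearMap 𝕜 ι α hp hq hpq b i = ∏ j, b j i :=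
  rfl

theorem one_le_norm_prodContinuousMultilinearMap_single_sub_single [DecidableEq α]
    (hp : p ≠ ∞) (hq : 0 < q.toReal) (hpq : p ≤ Fintype.card ι * q) {a b : α} (hab : a ≠ b) :
    1 ≤ ‖prodContinuousMultilinearMap 𝕜 ι α hp hq hpq
      fun _ => lp.single p a 1 - lp.single p b 1‖ := by
  have ha : (lp.single p a 1 - lp.single p b 1 : ℓ^p(α, 𝕜)) a = 1 := by
    rw [lp.coeFn_sub, Pi.sub_apply, lp.single_apply, lp.single_apply]
    simp [hab]
  calc (1 : ℝ) = ‖prodContinuousMultilinearMap 𝕜 ι α hp hq hpq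
        (fun _ => lp.single p a 1 - lp.single p b 1) a‖ := by
        rw [prodContinuousMultilinearMap_apply, Finset.prod_eq_one fun _ _ => ha, norm_one]
    _ ≤ _ := norm_apply_le_norm (zero_lt_one.trans_le Fact.out).ne' _ a

end lp
theorem exists_seq_of_forall_exists {β : Type*} {P : ℕ → β → Prop} {R : ℕ → β → β → Prop}
    {b₀ : β} (h₀ : P 0 b₀) (h : ∀ n b, P n b → ∃ b', P (n + 1) b' ∧ R n b b') :
    ∃ b : ℕ → β, ∀ n, P n (b n) ∧ R n (b n) (b (n + 1)) := by
  choose g hgP hgR using h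
  let c : ∀ n, {b // P n b} := fun n =>
    Nat.rec ⟨b₀, h₀⟩ (fun n t => ⟨g n t.1 t.2, hgP n t.1 t.2⟩) n
  exact ⟨fun n => (c n).1, fun n => ⟨(c n).2, hgR n _ _⟩⟩

theorem exists_strictMono_forall_eventually_mem {ι : Type*} [Countable ι]
    {P : ι → Set ℕ → Prop} (h : ∀ i, ∀ M₀ : Set ℕ, M₀.Infinite → ∃ M ⊆ M₀, M.Infinite ∧ P i M) :
    ∃ φ : ℕ → ℕ, StrictMono φ ∧ ∀ i, ∃ M, P i M ∧ ∀ᶠ k in atTop, φ k ∈ M := by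
  classical
  obtain ⟨e, he⟩ := Countable.exists_injective_nat ι
  have h' : ∀ n, ∀ M₀ : Set ℕ, M₀.Infinite → ∃ M ⊆ M₀, M.Infinite ∧ ∀ i, e i = n → P i M := by
    intro n M₀ hM₀
    by_cases hn : ∃ i, e i = n
    · obtain ⟨i, rfl⟩ := hn
      obtain ⟨M, hM, hMinf, hP⟩ := h i M₀ hM₀
      exact ⟨M, hM, hMinf, fun j hj => he hj ▸ hP⟩
    · exact ⟨M₀, subset_rfl, hM₀, fun i hi => (hn ⟨i, hi⟩).elim⟩
  obtain ⟨Q, hQ⟩ := exists_seq_of_forall_exists (b₀ := Set.univ) (P := fun _ M => M.Infinite)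
    (R := fun n M M' => M' ⊆ M ∧ ∀ i, e i = n → P i M') Set.infinite_univ fun n M hM => by
      obtain ⟨M', hM', hM'inf, hP⟩ := h' n M hM
      exact ⟨M', hM'inf, hM', hP⟩
  have hanti : Antitone Q := antitone_nat_of_succ_le fun n => (hQ n).2.1
  obtain ⟨φ, hφ, hφQ⟩ := extraction_forall_of_frequently fun n =>
    Nat.frequently_atTop_iff_infinite.2 (hQ n).1
  refine ⟨φ, hφ, fun i => ⟨Q (e i + 1), (hQ (e i)).2.2 i rfl, ?_⟩⟩
  filter_upwards [eventually_ge_atTop (e i + 1)] with k hk using hanti hk (hφQ k)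

theorem exists_mapClusterPt_ne_of_not_cauchySeq {E : Type*} [UniformSpace E] {s : Set E}
    (hs : IsCompact s) {w : ℕ → E} (hw : ∀ k, w k ∈ s) (h : ¬ CauchySeq w) :
    ∃ L L', L ≠ L' ∧ MapClusterPt L atTop w ∧ MapClusterPt L' atTop w := by
  obtain ⟨L, -, hL⟩ := hs.exists_mapClusterPt_of_frequently (l := atTop) (.of_forall hw)
  by_contra! hne
  exact h (hs.tendsto_nhds_of_unique_mapClusterPt (.of_forall hw)
    fun L' _ hL' => by_contra fun hLL' => hne L' L hLL' hL' hL).cauchySeq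

theorem CauchySeq.tendsto_sub_comp {G : Type*} [SeminormedAddCommGroup G] {s : ℕ → G}
    (hs : CauchySeq s) {a b : ℕ → ℕ} (ha : Tendsto a atTop atTop) (hb : Tendsto b atTop atTop) :
    Tendsto (fun k => s (a k) - s (b k)) atTop (𝓝 0) := by
  rw [cauchySeq_iff_tendsto_dist_atTop_0, ← prod_atTop_atTop_eq] at hs
  simpa [tendsto_zero_iff_norm_tendsto_zero, dist_eq_norm] using hs.comp (ha.prodMk hb)

namespace lp

variable {ι 𝕜 X : Type*} [NontriviallyNormedField 𝕜] [NormedAddCommGroup X] [NormedSpace 𝕜 X]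
  {x : ι → X} {C : ℝ}

theorem hasSum_norm_l1 (a : ℓ¹(ι, 𝕜)) : HasSum (fun k => ‖a k‖) ‖a‖ := by
  simpa using hasSum_norm (p := 1) (by simp) a

theorem norm_smul_le_abs_mul (hx : ∀ k, ‖x k‖ ≤ C) (a : ι → 𝕜) (k : ι) :
    ‖a k • x k‖ ≤ |C| * ‖a k‖ := by
  rw [norm_smul, mul_comm]
  exact mul_le_mul_of_nonneg_right ((hx k).trans (le_abs_self C)) (norm_nonneg _)

noncomputable def smulRightCLM (x : ι → X) (hx : ∀ k, ‖x k‖ ≤ C) :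
    ℓ¹(ι, 𝕜) →L[𝕜] ℓ¹(ι, X) :=
  LinearMap.mkContinuous
    { toFun a := ⟨fun k => a k • x k, ((memℓp_norm_iff.2 (lp.memℓp a)).const_mul |C|).mono'
        fun k => (norm_smul_le_abs_mul hx _ k).trans (le_abs_self _)⟩
      map_add' a b := by ext k; exact add_smul (a k) (b k) (x k)
      map_smul' c a := by ext k; exact smul_assoc c (a k) (x k) }
    |C| fun a => norm_le_of_forall_sum_le (by simp) (by positivity) fun s => by
      simp only [ENNReal.toReal_one, Real.rpow_one]
      calc ∑ k ∈ s, ‖a k • x k‖ ≤ ∑ k ∈ s, |C| * ‖a k‖ :=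
            Finset.sum_le_sum fun k _ => norm_smul_le_abs_mul hx a k
        _ ≤ |C| * ‖a‖ := by
            rw [← Finset.mul_sum]
            gcongr
            simpa using sum_rpow_le_norm_rpow (p := 1) (by simp) a s

variable [CompleteSpace X]

noncomputable def seriesCLM (x : ι → X) (hx : ∀ k, ‖x k‖ ≤ C) : ℓ¹(ι, 𝕜) →L[𝕜] X :=
  (tsumCLM 𝕜 ι X).comp (smulRightCLM x hx)

theorem hasSum_seriesCLM (hx : ∀ k, ‖x k‖ ≤ C) (a : ℓ¹(ι, 𝕜)) :
    HasSum (fun k => a k • x k) (seriesCLM x hx a) := by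
  have hs : Summable fun k => ‖smulRightCLM x hx a k‖ := by
    simpa using (lp.memℓp (smulRightCLM x hx a)).summable (p := 1) (by simp)
  exact hs.of_norm.hasSum

theorem mul_norm_le_norm_seriesCLM (hx : ∀ k, ‖x k‖ ≤ C) {ρ : ℝ}
    (h : ∀ (s : Finset ι) (a : ι → 𝕜), ρ * ∑ k ∈ s, ‖a k‖ ≤ ‖∑ k ∈ s, a k • x k‖)
    (a : ℓ¹(ι, 𝕜)) : ρ * ‖a‖ ≤ ‖seriesCLM x hx a‖ :=
  le_of_tendsto_of_tendsto' ((hasSum_norm_l1 a).mul_left ρ) (hasSum_seriesCLM hx a).norm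
    fun s => by simpa [Finset.mul_sum] using h s a

end lp

theorem ContinuousLinearMap.norm_sum_mul_le_of_norm_sub_le {ι 𝕜 X : Type*}
    [NontriviallyNormedField 𝕜] [NormedAddCommGroup X] [NormedSpace 𝕜 X] (g : X →L[𝕜] 𝕜)
    {s : Finset ι} {x : ι → X} {y : ι → 𝕜} {δ : ℝ} (h : ∀ k ∈ s, ‖g (x k) - y k‖ ≤ δ)
    (a : ι → 𝕜) :
    ‖∑ k ∈ s, a k * y k‖ ≤ ‖g‖ * ‖∑ k ∈ s, a k • x k‖ + δ * ∑ k ∈ s, ‖a k‖ := by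
  have hsplit : ∑ k ∈ s, a k * y k =
      g (∑ k ∈ s, a k • x k) - ∑ k ∈ s, a k * (g (x k) - y k) := by
    simp [map_sum, mul_sub]
  calc ‖∑ k ∈ s, a k * y k‖
      ≤ ‖g (∑ k ∈ s, a k • x k)‖ + ∑ k ∈ s, ‖a k * (g (x k) - y k)‖ := by
        rw [hsplit]
        exact (norm_sub_le _ _).trans (by gcongr; exact norm_sum_le _ _)
    _ ≤ ‖g‖ * ‖∑ k ∈ s, a k • x k‖ + δ * ∑ k ∈ s, ‖a k‖ := by
        rw [Finset.mul_sum]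
        gcongr with k hk
        · exact g.le_opNorm _
        · rw [norm_mul, mul_comm]
          exact mul_le_mul_of_nonneg_right (h k hk) (norm_nonneg _)

namespace RCLike

variable {𝕜 ι : Type*} [RCLike 𝕜]

theorem norm_le_abs_re_add_abs_im (a : 𝕜) : ‖a‖ ≤ |re a| + |im a| := by
  have h := norm_sq_eq_def (K := 𝕜) (z := a)
  nlinarith [abs_nonneg (re a), abs_nonneg (im a), sq_abs (re a), sq_abs (im a), norm_nonneg a,
    abs_mul_abs_self (re a)]

theorem exists_signs_sum_norm_le (s : Finset ι) (a : ι → 𝕜) :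
    ∃ σ τ : ι → Bool, ∑ k ∈ s, ‖a k‖ ≤
      ‖∑ k ∈ s, (if σ k then 1 else -1) * a k‖ + ‖∑ k ∈ s, (if τ k then 1 else -1) * a k‖ := by
  refine ⟨fun k => decide (0 ≤ re (a k)), fun k => decide (0 ≤ im (a k)), ?_⟩
  have hre : ∑ k ∈ s, |re (a k)| = re (∑ k ∈ s, (if 0 ≤ re (a k) then 1 else -1) * a k) := by
    rw [map_sum]
    refine Finset.sum_congr rfl fun k _ => ?_
    split_ifs with h <;> simp [abs_of_nonneg, abs_of_neg, *, not_le.1]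
  have him : ∑ k ∈ s, |im (a k)| = im (∑ k ∈ s, (if 0 ≤ im (a k) then 1 else -1) * a k) := by
    rw [map_sum]
    refine Finset.sum_congr rfl fun k _ => ?_
    split_ifs with h <;> simp [abs_of_nonneg, abs_of_neg, *, not_le.1]
  calc ∑ k ∈ s, ‖a k‖ ≤ ∑ k ∈ s, |re (a k)| + ∑ k ∈ s, |im (a k)| := by
        rw [← Finset.sum_add_distrib]
        exact Finset.sum_le_sum fun k _ => norm_le_abs_re_add_abs_im (a k)
    _ ≤ _ := by
        rw [hre, him]
        simp only [decide_eq_true_eq]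
        exact add_le_add (re_le_norm _) (im_le_norm _)

end RCLike

theorem le_norm_sum_smul_of_forall_signs {ι 𝕜 X : Type*} [RCLike 𝕜] [NormedAddCommGroup X]
    [NormedSpace 𝕜 X] {s : Finset ι} {x : ι → X} {z z' : 𝕜} {ρ : ℝ} (hsep : 8 * ρ ≤ ‖z - z'‖)
    (h : ∀ σ : ι → Bool, ∃ f : X →L[𝕜] 𝕜, ‖f‖ ≤ 1 ∧
      ∀ k ∈ s, ‖f (x k) - (if σ k then z else z')‖ ≤ ρ) (a : ι → 𝕜) :
    ρ * ∑ k ∈ s, ‖a k‖ ≤ ‖∑ k ∈ s, a k • x k‖ := by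
  -- realise `σ` and its negation and subtract: the difference sees `± (z - z')` at each `x k`
  have key : ∀ σ : ι → Bool, ‖z - z'‖ * ‖∑ k ∈ s, (if σ k then 1 else -1) * a k‖ ≤
      2 * ‖∑ k ∈ s, a k • x k‖ + 2 * ρ * ∑ k ∈ s, ‖a k‖ := by
    intro σ
    obtain ⟨f₁, hf₁, h₁⟩ := h σ
    obtain ⟨f₂, hf₂, h₂⟩ := h fun k => !σ k
    have hg : ∀ k ∈ s, ‖(f₁ - f₂) (x k) - (if σ k then 1 else -1) * (z - z')‖ ≤ 2 * ρ := by
      intro k hk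
      have h₁ := h₁ k hk
      have h₂ := h₂ k hk
      cases hσ : σ k <;> simp only [hσ, Bool.not_false, Bool.not_true, if_true, if_false,
        Bool.false_eq_true] at h₁ h₂ ⊢
      · calc _ = ‖(f₁ (x k) - z') - (f₂ (x k) - z)‖ := by simp only [sub_apply]; ring_nf
          _ ≤ 2 * ρ := (norm_sub_le _ _).trans (by linarith)
      · calc _ = ‖(f₁ (x k) - z) - (f₂ (x k) - z')‖ := by simp only [sub_apply]; ring_nf
          _ ≤ 2 * ρ := (norm_sub_le _ _).trans (by linarith)
    calc ‖z - z'‖ * ‖∑ k ∈ s, (if σ k then 1 else -1) * a k‖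
        = ‖∑ k ∈ s, a k * ((if σ k then 1 else -1) * (z - z'))‖ := by
          rw [← norm_mul, Finset.mul_sum]
          congr 1
          exact Finset.sum_congr rfl fun k _ => by ring
      _ ≤ ‖f₁ - f₂‖ * ‖∑ k ∈ s, a k • x k‖ + 2 * ρ * ∑ k ∈ s, ‖a k‖ :=
          (f₁ - f₂).norm_sum_mul_le_of_norm_sub_le hg a
      _ ≤ 2 * ‖∑ k ∈ s, a k • x k‖ + 2 * ρ * ∑ k ∈ s, ‖a k‖ := by
          gcongr
          exact (norm_sub_le _ _).trans (by linarith)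
  obtain ⟨σ, τ, hστ⟩ := RCLike.exists_signs_sum_norm_le s a
  have hA : 0 ≤ ∑ k ∈ s, ‖a k‖ := Finset.sum_nonneg fun k _ => norm_nonneg (a k)
  linarith [key σ, key τ, mul_le_mul_of_nonneg_left hστ (norm_nonneg (z - z')),
    mul_le_mul_of_nonneg_right hsep hA]

theorem cauchySeq_apply_of_forall_norm_le_one {𝕜 X : Type*} [RCLike 𝕜] [NormedAddCommGroup X]
    [NormedSpace 𝕜 X] {y : ℕ → X} (h : ∀ f : X →L[𝕜] 𝕜, ‖f‖ ≤ 1 → CauchySeq fun k => f (y k))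
    (f : X →L[𝕜] 𝕜) : CauchySeq fun k => f (y k) := by
  set c : 𝕜 := ((‖f‖ + 1 : ℝ) : 𝕜)
  have hc : ‖c‖ = ‖f‖ + 1 := by rw [RCLike.norm_ofReal, abs_of_pos (by positivity)]
  have hc0 : c ≠ 0 := norm_ne_zero_iff.1 (by rw [hc]; positivity)
  have hg : ‖c⁻¹ • f‖ ≤ 1 := by
    rw [norm_smul, norm_inv, hc, inv_mul_le_one₀ (by positivity)]
    linarith
  convert (uniformContinuous_const_smul c).comp_cauchySeq (h _ hg) using 2 with k
  simp [mul_inv_cancel_left₀ hc0]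

namespace Rosenthal

section Combinatorics

variable {β : Type*} (A B : ℕ → Set β)

def Splits (f : β) (M : Set ℕ) : Prop :=
  {n ∈ M | f ∈ A n}.Infinite ∧ {n ∈ M | f ∈ B n}.Infinite

def RealizesUpTo (u : ℕ → ℕ) (K : ℕ) (σ : ℕ → Bool) (f : β) : Prop :=
  ∀ k < K, f ∈ if σ k then A (u k) else B (u k)

def SplitsWithPatterns (u : ℕ → ℕ) (K : ℕ) (M : Set ℕ) : Prop :=
  ∀ σ : ℕ → Bool, ∀ M' ⊆ M, M'.Infinite → ∃ f, RealizesUpTo A B u K σ f ∧ Splits A B f M'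

variable {A B}

theorem Splits.of_finite_diff {f : β} {M M' : Set ℕ} (h : Splits A B f M)
    (hfin : (M \ M').Finite) : Splits A B f M' :=
  ⟨(h.1.sdiff hfin).mono fun _ hn => ⟨by_contra fun h => hn.2 ⟨hn.1.1, h⟩, hn.1.2⟩,
    (h.2.sdiff hfin).mono fun _ hn => ⟨by_contra fun h => hn.2 ⟨hn.1.1, h⟩, hn.1.2⟩⟩

theorem RealizesUpTo.congr {u u' : ℕ → ℕ} {K : ℕ} {σ σ' : ℕ → Bool} {f : β}
    (h : RealizesUpTo A B u K σ f) (hu : ∀ k < K, u k = u' k) (hσ : ∀ k < K, σ k = σ' k) :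
    RealizesUpTo A B u' K σ' f := fun k hk => hu k hk ▸ hσ k hk ▸ h k hk

theorem realizesUpTo_update_succ {u : ℕ → ℕ} {K n : ℕ} {σ : ℕ → Bool} {f : β} :
    RealizesUpTo A B (update u K n) (K + 1) σ f ↔
      RealizesUpTo A B u K σ f ∧ f ∈ if σ K then A n else B n := by
  simp only [RealizesUpTo, Nat.forall_lt_succ_right, update_self]
  refine and_congr_left' (forall₂_congr fun k hk => ?_)
  rw [update_of_ne hk.ne]

/- If no extension worked, we could build a decreasing chain `Q j` of infinite subsets of `M`,
points `m j ∈ Q j` below `Q (j + 1)` and patterns `σ j` such that no functional realising `σ j`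
on `update u K (m j)` splits `Q (j + 1)`. Some pattern recurs on an infinite set `J`; a
functional realising it on `u` and splitting `{m j | j ∈ J}` contradicts this at some `j ∈ J`. -/
theorem SplitsWithPatterns.exists_update {u : ℕ → ℕ} {K : ℕ} {M : Set ℕ} (hM : M.Infinite)
    (h : SplitsWithPatterns A B u K M) :
    ∃ n, ∃ M' ⊆ M, M'.Infinite ∧ SplitsWithPatterns A B (update u K n) (K + 1) M' := by
  by_contra! hno
  obtain ⟨Q, hQ⟩ := exists_seq_of_forall_exists (b₀ := M)
    (P := fun _ Q => Q ⊆ M ∧ Q.Infinite)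
    (R := fun _ Q Q' => Q' ⊆ Q ∧ ∃ m ∈ Q, (∀ x ∈ Q', m < x) ∧ ∃ σ, ∀ f,
      RealizesUpTo A B (update u K m) (K + 1) σ f → ¬ Splits A B f Q')
    ⟨subset_rfl, hM⟩ fun _ Q ⟨hQM, hQ⟩ => by
      obtain ⟨m, hm⟩ := hQ.nonempty
      have hQm : {x ∈ Q | m < x}.Infinite :=
        (hQ.sdiff (Set.finite_Iic m)).mono fun x hx => ⟨hx.1, not_le.1 hx.2⟩
      have hkill := hno m _ (fun x hx => hQM hx.1) hQm
      simp only [SplitsWithPatterns, not_forall, not_exists, not_and] at hkill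
      obtain ⟨σ, Q', hQ'sub, hQ'inf, hkill⟩ := hkill
      exact ⟨Q', ⟨fun x hx => hQM (hQ'sub hx).1, hQ'inf⟩, fun x hx => (hQ'sub hx).1,
        m, hm, fun x hx => (hQ'sub hx).2, σ, hkill⟩
  choose m hmQ hmlt σ hkill using fun j => (hQ j).2.2
  have hQanti : Antitone Q := antitone_nat_of_succ_le fun j => (hQ j).2.1
  have hmono : StrictMono m := strictMono_nat_of_lt_succ fun j => hmlt j _ (hmQ (j + 1))
  obtain ⟨τ, hτ⟩ := Finite.exists_infinite_fiber fun j => fun k : Fin (K + 1) => σ j k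
  set J := {j | (fun k : Fin (K + 1) => σ j k) = τ}
  have hJ : J.Infinite := Set.infinite_coe_iff.mp hτ
  obtain ⟨j₀, hj₀⟩ := hJ.nonempty
  have hσ : ∀ j ∈ J, ∀ k < K + 1, σ j₀ k = σ j k :=
    fun j hj k hk => congrFun (hj₀.trans hj.symm) ⟨k, hk⟩
  obtain ⟨f, hf, hsplit⟩ := h (σ j₀) (m '' J)
    (Set.image_subset_iff.2 fun j _ => (hQ j).1.1 (hmQ j)) (hJ.image hmono.injective.injOn)
  obtain ⟨_, ⟨j, hj, rfl⟩, hfj⟩ : ∃ n ∈ m '' J, f ∈ if σ j₀ K then A n else B n := by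
    cases σ j₀ K
    exacts [hsplit.2.nonempty, hsplit.1.nonempty]
  refine hkill j f ?_ (hsplit.of_finite_diff (((Set.finite_Iic j).image m).subset ?_))
  · exact (realizesUpTo_update_succ.2 ⟨hf, hfj⟩).congr (fun _ _ => rfl) (hσ j hj)
  · rintro _ ⟨⟨i, -, rfl⟩, hi⟩
    exact ⟨i, show i ≤ j from not_lt.1 fun hji => hi (hQanti hji (hmQ i)), rfl⟩

theorem exists_realizesUpTo_of_forall_splits {M₀ : Set ℕ} (hM₀ : M₀.Infinite)
    (h : ∀ M ⊆ M₀, M.Infinite → ∃ f, Splits A B f M) :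
    ∃ u : ℕ → ℕ, ∀ K σ, ∃ f, RealizesUpTo A B u K σ f := by
  have h₀ : SplitsWithPatterns A B (fun _ => 0) 0 M₀ := fun _ M hM hMinf =>
    (h M hM hMinf).imp fun _ hf => ⟨fun k hk => absurd hk k.not_lt_zero, hf⟩
  obtain ⟨b, hb⟩ := exists_seq_of_forall_exists (b₀ := ((fun _ => 0 : ℕ → ℕ), M₀))
    (P := fun K b => b.2.Infinite ∧ SplitsWithPatterns A B b.1 K b.2)
    (R := fun K b b' => ∀ k < K, b'.1 k = b.1 k) ⟨hM₀, h₀⟩ fun K b hb => by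
      obtain ⟨n, M', -, hM', hext⟩ := hb.2.exists_update hb.1
      exact ⟨(update b.1 K n, M'), ⟨hM', hext⟩, fun k hk => update_of_ne hk.ne _ _⟩
  have hagree : ∀ K, ∀ k < K, (b K).1 k = (b (k + 1)).1 k := by
    intro K
    induction K with
    | zero => simp
    | succ K ih =>
      intro k hk
      rcases Nat.lt_succ_iff_lt_or_eq.1 hk with hk | rfl
      · rw [(hb K).2 k hk, ih k hk]
      · rfl
  refine ⟨fun k => (b (k + 1)).1 k, fun K σ => ?_⟩
  obtain ⟨f, hf, -⟩ := (hb K).1.2 σ (b K).2 subset_rfl (hb K).1.1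
  exact ⟨f, hf.congr (hagree K) fun _ _ => rfl⟩

end Combinatorics

variable {𝕜 X : Type*} [RCLike 𝕜] [NormedAddCommGroup X] [NormedSpace 𝕜 X]

def dualNear (x : X) (z : 𝕜) (ρ : ℝ) : Set (X →L[𝕜] 𝕜) := {f | ‖f‖ ≤ 1 ∧ ‖f x - z‖ ≤ ρ}

theorem infinite_dualNear_of_mapClusterPt {v : ℕ → X} {φ : ℕ → ℕ} (hφ : StrictMono φ)
    {f : X →L[𝕜] 𝕜} (hf : ‖f‖ ≤ 1) {M : Set ℕ} (hM : ∀ᶠ k in atTop, φ k ∈ M) {L z : 𝕜}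
    {ρ : ℝ} (hL : MapClusterPt L atTop fun k => f (v (φ k))) (hz : dist L z < ρ / 2) :
    {n ∈ M | f ∈ dualNear (v n) z ρ}.Infinite := by
  have hfreq : ∃ᶠ k in atTop, dist (f (v (φ k))) L < ρ / 2 ∧ φ k ∈ M :=
    (hL.frequently (Metric.ball_mem_nhds L (dist_nonneg.trans_lt hz))).and_eventually hM
  refine ((Nat.frequently_atTop_iff_infinite.1 hfreq).image hφ.injective.injOn).mono ?_
  rintro _ ⟨k, ⟨hk, hkM⟩, rfl⟩
  refine ⟨hkM, hf, ?_⟩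
  rw [← dist_eq_norm]
  linarith [dist_triangle (f (v (φ k))) L z]

theorem exists_cauchySeq_subseq_of_forall_not_splits {v : ℕ → X} {C : ℝ}
    (hv : ∀ n, ‖v n‖ ≤ C)
    (h : ∀ (z z' : 𝕜) (ρ : ℝ), 0 < ρ → 8 * ρ ≤ ‖z - z'‖ → ∀ M₀ : Set ℕ, M₀.Infinite →
      ∃ M ⊆ M₀, M.Infinite ∧
        ∀ f, ¬ Splits (fun n => dualNear (v n) z ρ) (fun n => dualNear (v n) z' ρ) f M) :
    ∃ φ : ℕ → ℕ, StrictMono φ ∧ ∀ f : X →L[𝕜] 𝕜, CauchySeq fun k => f (v (φ k)) := by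
  obtain ⟨d, hd⟩ := TopologicalSpace.exists_dense_seq 𝕜
  set ρ : ℕ → ℝ := fun c => 1 / (c + 1)
  obtain ⟨φ, hφ, hφM⟩ := exists_strictMono_forall_eventually_mem (ι := ℕ × ℕ × ℕ)
    (P := fun t M => 8 * ρ t.2.2 ≤ ‖d t.1 - d t.2.1‖ → ∀ f, ¬ Splits
      (fun n => dualNear (v n) (d t.1) (ρ t.2.2)) (fun n => dualNear (v n) (d t.2.1) (ρ t.2.2))
      f M)
    fun ⟨a, b, c⟩ M₀ hM₀ => by
      by_cases hsep : 8 * ρ c ≤ ‖d a - d b‖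
      · obtain ⟨M, hM, hMinf, hP⟩ := h (d a) (d b) (ρ c) (by positivity) hsep M₀ hM₀
        exact ⟨M, hM, hMinf, fun _ => hP⟩
      · exact ⟨M₀, subset_rfl, hM₀, fun h => (hsep h).elim⟩
  refine ⟨φ, hφ, cauchySeq_apply_of_forall_norm_le_one fun f hf => ?_⟩
  by_contra hnc
  have hbdd : ∀ k, f (v (φ k)) ∈ Metric.closedBall (0 : 𝕜) C := fun k => by
    rw [mem_closedBall_zero_iff]
    exact (f.le_opNorm _).trans ((mul_le_of_le_one_left (norm_nonneg _) hf).trans (hv _))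
  obtain ⟨L, L', hLL', hL, hL'⟩ :=
    exists_mapClusterPt_ne_of_not_cauchySeq (isCompact_closedBall 0 C) hbdd hnc
  obtain ⟨c, hc⟩ := exists_nat_one_div_lt (show 0 < dist L L' / 16 by
    have := dist_pos.2 hLL'; positivity)
  have hρ : 0 < ρ c := by positivity
  obtain ⟨a, ha⟩ := hd.exists_dist_lt L (half_pos hρ)
  obtain ⟨b, hb⟩ := hd.exists_dist_lt L' (half_pos hρ)
  have hsep : 8 * ρ c ≤ ‖d a - d b‖ := by
    rw [← dist_eq_norm]
    linarith [dist_triangle4 L (d a) (d b) L', dist_comm L' (d b)]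
  obtain ⟨M, hP, hM⟩ := hφM (a, b, c)
  exact hP hsep f ⟨infinite_dualNear_of_mapClusterPt hφ hf hM hL ha,
    infinite_dualNear_of_mapClusterPt hφ hf hM hL' hb⟩

end Rosenthal

open Rosenthal in
theorem rosenthal_dichotomy {𝕜 X : Type*} [RCLike 𝕜] [NormedAddCommGroup X] [NormedSpace 𝕜 X]
    [CompleteSpace X] {v : ℕ → X} {C : ℝ} (hv : ∀ n, ‖v n‖ ≤ C) :
    (∃ φ : ℕ → ℕ, StrictMono φ ∧ ∀ f : X →L[𝕜] 𝕜, CauchySeq fun k => f (v (φ k))) ∨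
      ∃ (T : ℓ¹(ℕ, 𝕜) →L[𝕜] X) (c : ℝ), 0 < c ∧ ∀ a, c * ‖a‖ ≤ ‖T a‖ := by
  by_cases hA : ∃ (z z' : 𝕜) (ρ : ℝ), 0 < ρ ∧ 8 * ρ ≤ ‖z - z'‖ ∧ ∃ M₀ : Set ℕ, M₀.Infinite ∧
      ∀ M ⊆ M₀, M.Infinite →
        ∃ f, Splits (fun n => dualNear (v n) z ρ) (fun n => dualNear (v n) z' ρ) f M
  · obtain ⟨z, z', ρ, hρ, hsep, M₀, hM₀, hsplit⟩ := hA
    obtain ⟨u, hu⟩ := exists_realizesUpTo_of_forall_splits hM₀ hsplit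
    refine Or.inr ⟨lp.seriesCLM (v ∘ u) (fun k => hv (u k)), ρ, hρ,
      lp.mul_norm_le_norm_seriesCLM _ fun s a =>
        le_norm_sum_smul_of_forall_signs hsep (fun σ => ?_) a⟩
    obtain ⟨K, hK⟩ := s.exists_nat_subset_range
    obtain ⟨f, hf⟩ := hu (K + 1) σ
    have hmem : ∀ k < K + 1, f ∈ dualNear (v (u k)) (if σ k then z else z') ρ := fun k hk => by
      have := hf k hk
      revert this
      cases σ k <;> exact id
    -- the index `0 < K + 1` gives `‖f‖ ≤ 1` even when `s` is empty
    exact ⟨f, (hmem 0 K.succ_pos).1,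
      fun k hk => (hmem k (Nat.lt_succ_of_lt (Finset.mem_range.1 (hK hk)))).2⟩
  · push Not at hA
    exact Or.inl (exists_cauchySeq_subseq_of_forall_not_splits hv hA)

theorem exists_bounded_lift_single {𝕜 X α : Type*} [NontriviallyNormedField 𝕜]
    [CompleteSpace 𝕜] [NormedAddCommGroup X] [NormedSpace 𝕜 X] [CompleteSpace X]
    [DecidableEq α] {p : ℝ≥0∞} [Fact (1 ≤ p)] {π : X →L[𝕜] ℓ^p(α, 𝕜)} (hπ : Surjective π) :
    ∃ x : α → X, (∀ n, π (x n) = lp.single p n 1) ∧ ∃ C, ∀ n, ‖x n‖ ≤ C := by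
  obtain ⟨C, -, hC⟩ := π.exists_preimage_norm_le hπ
  choose x hx hxC using fun n => hC (lp.single p n 1)
  refine ⟨x, hx, C, fun n => (hxC n).trans_eq ?_⟩
  rw [lp.norm_single (zero_lt_one.trans_le Fact.out), norm_one, mul_one]

theorem stmt_17_general {𝕜 X Y : Type*} [RCLike 𝕜] [NormedAddCommGroup X] [NormedSpace 𝕜 X]
    [CompleteSpace X] [NormedAddCommGroup Y] [NormedSpace 𝕜 Y]
    (N : ℕ) (p q : ℝ≥0∞) [Fact (1 ≤ p)] [Fact (1 ≤ q)]
    (hp' : p ≠ ∞) (hq' : q ≠ ∞) (hNqp : p ≤ (N : ℝ≥0∞) * q)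
    (hnol1 : ¬ ∃ (T : lp (fun _ : ℕ => 𝕜) 1 →L[𝕜] X) (c : ℝ), 0 < c ∧
      ∀ z, c * ‖z‖ ≤ ‖T z‖)
    (hquot : ∃ π : X →L[𝕜] lp (fun _ : ℕ => 𝕜) p, Function.Surjective π)
    (hembed : ∃ (J : lp (fun _ : ℕ => 𝕜) q →L[𝕜] Y) (c : ℝ), 0 < c ∧
      ∀ z, c * ‖z‖ ≤ ‖J z‖) :
    ∃ A : ContinuousMultilinearMap 𝕜 (fun _ : Fin N => X) Y,
      ¬ ∀ (u : ℕ → X) (x : X),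
        (∀ f : X →L[𝕜] 𝕜, Tendsto (fun n => f (u n)) atTop (nhds (f x))) →
        Tendsto (fun n => A (fun _ => u n)) atTop (nhds (A (fun _ => x))) := by
  obtain ⟨π, hπ⟩ := hquot
  obtain ⟨J, c, hc, hJ⟩ := hembed
  have hq0 : 0 < q.toReal := ENNReal.toReal_pos (zero_lt_one.trans_le Fact.out).ne' hq'
  have : Nonempty (Fin N) := ⟨⟨0, Nat.pos_of_ne_zero fun hN =>
    (zero_lt_one.trans_le (Fact.out : 1 ≤ p)).ne' (by simpa [hN] using hNqp)⟩⟩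
  obtain ⟨x, hπx, C, hxC⟩ := exists_bounded_lift_single hπ
  obtain ⟨φ, hφ, hcauchy⟩ := (rosenthal_dichotomy hxC).resolve_right hnol1
  have hpq : p ≤ Fintype.card (Fin N) * q := by simpa using hNqp
  set D := lp.prodContinuousMultilinearMap 𝕜 (Fin N) ℕ hp' hq0 hpq
  set A := (J.compContinuousMultilinearMap D).compContinuousLinearMap fun _ => π
  refine ⟨A, fun hwsc => ?_⟩
  set u : ℕ → X := fun k => x (φ (2 * k + 1)) - x (φ (2 * k))
  have hweak : ∀ f : X →L[𝕜] 𝕜, Tendsto (fun k => f (u k)) atTop (𝓝 (f 0)) := fun f => by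
    simpa [u] using (hcauchy f).tendsto_sub_comp
      (tendsto_atTop_mono (fun k => show k ≤ 2 * k + 1 by omega) tendsto_id)
      (tendsto_atTop_mono (fun k => show k ≤ 2 * k by omega) tendsto_id)
  have hlow : ∀ k, c ≤ ‖A fun _ => u k‖ := fun k => by
    have hD := lp.one_le_norm_prodContinuousMultilinearMap_single_sub_single (𝕜 := 𝕜) hp' hq0
      hpq (hφ.injective.ne (show 2 * k + 1 ≠ 2 * k by omega))
    rw [← hπx, ← hπx, ← map_sub] at hD
    exact (le_mul_of_one_le_right hc.le hD).trans (hJ _)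
  have h0 := (hwsc u 0 hweak).norm
  rw [show (fun _ : Fin N => (0 : X)) = 0 from rfl, A.map_zero, norm_zero] at h0
  obtain ⟨k, hk⟩ := (h0.eventually (gt_mem_nhds hc)).exists
  exact (hlow k).not_gt hk

/-- Let `X, Y` be Banach spaces, `N ∈ ℕ` and `1 < p, q < ∞` with `Nq ≥ p`.
If `X` contains no subspace isomorphic to `ℓ₁` (no bounded-below operator `ℓ₁ → X`), there is
a bounded surjective operator from `X` onto `ℓ_p`, and there is an isomorphic embedding of
`ℓ_q` into `Y` (a bounded-below operator `ℓ_q → Y`), then there exists a continuous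
`N`-homogeneous polynomial from `X` to `Y` (the diagonal of a continuous `N`-linear map)
which is not weakly sequentially continuous. -/
theorem stmt_17 {𝕜 X Y : Type*} [RCLike 𝕜] [NormedAddCommGroup X] [NormedSpace 𝕜 X]
    [CompleteSpace X] [NormedAddCommGroup Y] [NormedSpace 𝕜 Y] [CompleteSpace Y]
    (N : ℕ) (p q : ℝ≥0∞) [Fact (1 ≤ p)] [Fact (1 ≤ q)]
    (hp : 1 < p) (hp' : p ≠ ∞) (hq : 1 < q) (hq' : q ≠ ∞) (hNqp : p ≤ (N : ℝ≥0∞) * q)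
    (hnol1 : ¬ ∃ (T : lp (fun _ : ℕ => 𝕜) 1 →L[𝕜] X) (c : ℝ), 0 < c ∧
      ∀ z, c * ‖z‖ ≤ ‖T z‖)
    (hquot : ∃ π : X →L[𝕜] lp (fun _ : ℕ => 𝕜) p, Function.Surjective π)
    (hembed : ∃ (J : lp (fun _ : ℕ => 𝕜) q →L[𝕜] Y) (c : ℝ), 0 < c ∧
      ∀ z, c * ‖z‖ ≤ ‖J z‖) :
    ∃ A : ContinuousMultilinearMap 𝕜 (fun _ : Fin N => X) Y,
      ¬ ∀ (u : ℕ → X) (x : X),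
        (∀ f : X →L[𝕜] 𝕜, Tendsto (fun n => f (u n)) atTop (nhds (f x))) →
        Tendsto (fun n => A (fun _ => u n)) atTop (nhds (A (fun _ => x))) :=
  stmt_17_general N p q hp' hq' hNqp hnol1 hquot hembed
end
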